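/- arXiv:1905.12811 — 6 statements merged into one kernel-verified Lean document; each statement's English description precedes it below -/
import Mathlib

section
/- Let ν be a Borel probability measure on [0,∞) with finite first moment. For each l ≥ 0, writing A_l^ν = {0 = a₁ ≤ a₂ ≤ … ≤ a_{2^l+1} = +∞}, define the discrete probability measure ν_{l+1} := Σ_{i=1}^{2^l} ν([a_i, a_{i+1})) · δ_{m^ν_{[a_i,a_{i+1})}}. Then the sequence (ν_{l+1})_{l≥0} converges weakly to ν as l → +∞. -/
/-!
`ν_{l+1}` is the image of `ν` under the map sending each point to the barycenter of its cell,
so by dominated convergence it suffices that, for `ν`-a.e. `x`, the barycenter of the cell of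
`x` at stage `l` tends to `x`. For such `x`, `ν` charges every interval `[x, t)` and `(t, x]`
as well as every cell containing `x`. These cells decrease to an interval `S`, and each lies on
one side of the barycenter of its predecessor. If `ν(S) > 0`, the barycenters converge to the
barycenter `m` of `S`, so `S` lies on one side of `m`; since `m ∈ S`, the interval between `x`
and `m` is a `ν`-null subset of `S`, whence `m = x`. If `ν(S) = 0`, the same one-sided
positivity forces `S = {x}`, and the barycenters, which lie in the shrinking cells, converge
to `x`.
-/

open MeasureTheory Set Filter

/-- Barycenter of `ν` over the interval `[a, b) ⊂ [0,∞]` (endpoints in `EReal`),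
with the convention that it equals the left endpoint `a` when the interval is null. -/
noncomputable def ebary (ν : Measure ℝ) (a b : EReal) : EReal :=
  if ν {x : ℝ | a ≤ (x : EReal) ∧ (x : EReal) < b} = 0 then a
  else (((∫ r in {x : ℝ | a ≤ (x : EReal) ∧ (x : EReal) < b}, r ∂ν) /
      (ν {x : ℝ | a ≤ (x : EReal) ∧ (x : EReal) < b}).toReal : ℝ) : EReal)

/-- The sorted points `0 = a₁ ≤ a₂ ≤ ⋯ ≤ a_{2^l+1} = +∞` of the recursively defined
set `A_l^ν`: `pts ν l i` is `a_{i+1}` for `i = 0, …, 2^l`.  At each stage the barycenter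
of each interval `[aᵢ, aᵢ₊₁)` is inserted between its endpoints. -/
noncomputable def pts (ν : Measure ℝ) : ℕ → ℕ → EReal
  | 0, 0 => 0
  | 0, _ + 1 => ⊤
  | l + 1, i =>
      if i % 2 = 0 then pts ν l (i / 2)
      else ebary ν (pts ν l (i / 2)) (pts ν l (i / 2 + 1))

/-- The `i`-th interval `[aᵢ, aᵢ₊₁)` of the partition at stage `l` (as a subset of `ℝ`). -/
def seg (ν : Measure ℝ) (l i : ℕ) : Set ℝ :=
  {x : ℝ | pts ν l i ≤ (x : EReal) ∧ (x : EReal) < pts ν l (i + 1)}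

/-- The discrete approximation `ν_{l+1} = ∑_{i=1}^{2^l} ν([aᵢ, aᵢ₊₁)) δ_{m^ν_{[aᵢ,aᵢ₊₁)}}`. -/
noncomputable def discreteApprox (ν : Measure ℝ) (l : ℕ) : Measure ℝ :=
  ∑ i ∈ Finset.range (2 ^ l),
    ν (seg ν l i) • Measure.dirac ((ebary ν (pts ν l i) (pts ν l (i + 1))).toReal)

open Topology

section Barycenter

variable {ν : Measure ℝ} [IsFiniteMeasure ν] {s t : Set ℝ} {c : ℝ}

lemma lt_setAverage_of_subset_Ici (hν : Integrable (fun r : ℝ => r) ν) (hs : MeasurableSet s)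
    (hsc : s ⊆ Ici c) (hts : t ⊆ s) (htc : t ⊆ Ioi c) (ht : ν t ≠ 0) :
    c < ⨍ r in s, r ∂ν := by
  have hpos : 0 < ν.real s :=
    ENNReal.toReal_pos (fun h => ht (measure_mono_null hts h)) (measure_ne_top ν s)
  have hint : 0 < ∫ r in s, (r - c) ∂ν := by
    refine (setIntegral_pos_iff_support_of_nonneg_ae
      (ae_restrict_of_forall_mem hs fun r hr => sub_nonneg.2 (hsc hr))
      (hν.sub (integrable_const c)).integrableOn).2 ?_
    refine (pos_iff_ne_zero.2 ht).trans_le (measure_mono fun r hr => ⟨?_, hts hr⟩)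
    exact sub_ne_zero.2 (htc hr).ne'
  rw [integral_sub hν.integrableOn (integrable_const c).integrableOn, setIntegral_const,
    smul_eq_mul, sub_pos] at hint
  rw [setAverage_eq, smul_eq_mul, lt_inv_mul_iff₀ hpos]
  linarith

lemma setAverage_lt_of_subset_Iic (hν : Integrable (fun r : ℝ => r) ν) (hs : MeasurableSet s)
    (hsc : s ⊆ Iic c) (hts : t ⊆ s) (htc : t ⊆ Iio c) (ht : ν t ≠ 0) :
    ⨍ r in s, r ∂ν < c := by
  have hpos : 0 < ν.real s :=
    ENNReal.toReal_pos (fun h => ht (measure_mono_null hts h)) (measure_ne_top ν s)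
  have hint : 0 < ∫ r in s, (c - r) ∂ν := by
    refine (setIntegral_pos_iff_support_of_nonneg_ae
      (ae_restrict_of_forall_mem hs fun r hr => sub_nonneg.2 (hsc hr))
      ((integrable_const c).sub hν).integrableOn).2 ?_
    refine (pos_iff_ne_zero.2 ht).trans_le (measure_mono fun r hr => ⟨?_, hts hr⟩)
    exact sub_ne_zero.2 (htc hr).ne'
  rw [integral_sub (integrable_const c).integrableOn hν.integrableOn, setIntegral_const,
    smul_eq_mul, sub_pos] at hint
  rw [setAverage_eq, smul_eq_mul, inv_mul_lt_iff₀ hpos]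
  linarith

lemma setAverage_mem_of_ordConnected (hν : Integrable (fun r : ℝ => r) ν)
    (hs : MeasurableSet s) (hconn : s.OrdConnected) (h0 : ν s ≠ 0) : ⨍ r in s, r ∂ν ∈ s := by
  by_contra hm
  have hside : s ⊆ Iio (⨍ r in s, r ∂ν) ∨ s ⊆ Ioi (⨍ r in s, r ∂ν) := by
    by_contra h
    simp only [not_or, not_subset, mem_Iio, mem_Ioi, not_lt] at h
    obtain ⟨⟨a, ha, ham⟩, ⟨b, hb, hbm⟩⟩ := h
    exact hm (hconn.out hb ha ⟨hbm, ham⟩)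
  rcases hside with hlt | hgt
  · exact (setAverage_lt_of_subset_Iic hν hs (hlt.trans Iio_subset_Iic_self) le_rfl hlt
      h0).false
  · exact (lt_setAverage_of_subset_Ici hν hs (hgt.trans Ioi_subset_Ici_self) le_rfl hgt
      h0).false

lemma tendsto_setAverage_iInter (hν : Integrable (fun r : ℝ => r) ν) {S : ℕ → Set ℝ}
    (hS : ∀ l, MeasurableSet (S l)) (hanti : Antitone S) (h0 : ν (⋂ l, S l) ≠ 0) :
    Tendsto (fun l => ⨍ r in S l, r ∂ν) atTop (𝓝 (⨍ r in ⋂ l, S l, r ∂ν)) := by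
  simp_rw [setAverage_eq, smul_eq_mul, measureReal_def]
  have hmeas : Tendsto (fun l => (ν (S l)).toReal) atTop (𝓝 (ν (⋂ l, S l)).toReal) :=
    (ENNReal.tendsto_toReal (measure_ne_top _ _)).comp
      (tendsto_measure_iInter_atTop (fun l => (hS l).nullMeasurableSet) hanti
        ⟨0, measure_ne_top _ _⟩)
  exact (hmeas.inv₀ (ENNReal.toReal_pos h0 (measure_ne_top _ _)).ne').mul
    (tendsto_setIntegral_of_antitone hS hanti ⟨0, hν.integrableOn⟩)

end Barycenter

section NestedIntervals

variable {ν : Measure ℝ} {S : ℕ → Set ℝ} {s : Set ℝ} {x y : ℝ}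

lemma eventually_subset_Iio_of_measure_iInter_eq_zero (hanti : Antitone S)
    (hconn : ∀ l, (S l).OrdConnected) (hx : ∀ l, x ∈ S l) (h0 : ν (⋂ l, S l) = 0)
    (hy : ν (Ico x y) ≠ 0) : ∀ᶠ l in atTop, S l ⊆ Iio y := by
  have hxy : x ≤ y := by
    by_contra! h
    exact hy (by rw [Ico_eq_empty_of_le h.le, measure_empty])
  obtain ⟨L, hL⟩ : ∃ L, y ∉ S L := by
    by_contra! h
    exact hy (measure_mono_null (Ico_subset_Icc_self.trans
      ((ordConnected_iInter hconn).out (mem_iInter.2 hx) (mem_iInter.2 h))) h0)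
  filter_upwards [eventually_ge_atTop L] with l hl z hz
  by_contra! hyz
  exact hL ((hconn L).out (hx L) (hanti hl hz) ⟨hxy, not_lt.1 hyz⟩)

lemma eventually_subset_Ioi_of_measure_iInter_eq_zero (hanti : Antitone S)
    (hconn : ∀ l, (S l).OrdConnected) (hx : ∀ l, x ∈ S l) (h0 : ν (⋂ l, S l) = 0)
    (hy : ν (Ioc y x) ≠ 0) : ∀ᶠ l in atTop, S l ⊆ Ioi y := by
  have hxy : y ≤ x := by
    by_contra! h
    exact hy (by rw [Ioc_eq_empty_of_le h.le, measure_empty])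
  obtain ⟨L, hL⟩ : ∃ L, y ∉ S L := by
    by_contra! h
    exact hy (measure_mono_null (Ioc_subset_Icc_self.trans
      ((ordConnected_iInter hconn).out (mem_iInter.2 h) (mem_iInter.2 hx))) h0)
  filter_upwards [eventually_ge_atTop L] with l hl z hz
  by_contra! hyz
  exact hL ((hconn L).out (hanti hl hz) (hx L) ⟨not_lt.1 hyz, hxy⟩)

variable [IsFiniteMeasure ν]

lemma measure_Ico_setAverage_eq_zero (hν : Integrable (fun r : ℝ => r) ν)
    (hs : MeasurableSet s) (hconn : s.OrdConnected) (h0 : ν s ≠ 0)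
    (hle : s ⊆ Iic (⨍ r in s, r ∂ν)) (hx : x ∈ s) :
    ν (Ico x (⨍ r in s, r ∂ν)) = 0 := by
  by_contra h
  have hsub : Ico x (⨍ r in s, r ∂ν) ⊆ s :=
    Ico_subset_Icc_self.trans (hconn.out hx (setAverage_mem_of_ordConnected hν hs hconn h0))
  exact (setAverage_lt_of_subset_Iic hν hs hle hsub (fun _ hr => hr.2) h).false

lemma measure_Ioc_setAverage_eq_zero (hν : Integrable (fun r : ℝ => r) ν)
    (hs : MeasurableSet s) (hconn : s.OrdConnected) (h0 : ν s ≠ 0)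
    (hge : s ⊆ Ici (⨍ r in s, r ∂ν)) (hx : x ∈ s) :
    ν (Ioc (⨍ r in s, r ∂ν) x) = 0 := by
  by_contra h
  have hsub : Ioc (⨍ r in s, r ∂ν) x ⊆ s :=
    Ioc_subset_Icc_self.trans (hconn.out (setAverage_mem_of_ordConnected hν hs hconn h0) hx)
  exact (lt_setAverage_of_subset_Ici hν hs hge hsub (fun _ hr => hr.1) h).false

theorem tendsto_setAverage_of_antitone (hν : Integrable (fun r : ℝ => r) ν)
    (hS : ∀ l, MeasurableSet (S l)) (hanti : Antitone S) (hconn : ∀ l, (S l).OrdConnected)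
    (hx : ∀ l, x ∈ S l) (hpos : ∀ l, ν (S l) ≠ 0)
    (hside : ∀ l, S (l + 1) ⊆ Iio (⨍ r in S l, r ∂ν) ∨ S (l + 1) ⊆ Ici (⨍ r in S l, r ∂ν))
    (hright : ∀ t, x < t → ν (Ico x t) ≠ 0) (hleft : ∀ t, t < x → ν (Ioc t x) ≠ 0) :
    Tendsto (fun l => ⨍ r in S l, r ∂ν) atTop (𝓝 x) := by
  by_cases h0 : ν (⋂ l, S l) = 0
  · refine tendsto_order.2 ⟨fun y hy => ?_, fun y hy => ?_⟩
    · filter_upwards [eventually_subset_Ioi_of_measure_iInter_eq_zero hanti hconn hx h0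
        (hleft y hy)] with l hl
      exact lt_setAverage_of_subset_Ici hν (hS l) (hl.trans Ioi_subset_Ici_self) le_rfl hl
        (hpos l)
    · filter_upwards [eventually_subset_Iio_of_measure_iInter_eq_zero hanti hconn hx h0
        (hright y hy)] with l hl
      exact setAverage_lt_of_subset_Iic hν (hS l) (hl.trans Iio_subset_Iic_self) le_rfl hl
        (hpos l)
  have hlim := tendsto_setAverage_iInter hν hS hanti h0
  set m := ⨍ r in ⋂ l, S l, r ∂ν
  have hSm : MeasurableSet (⋂ l, S l) := MeasurableSet.iInter hS
  have hxS : x ∈ ⋂ l, S l := mem_iInter.2 hx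
  suffices m = x by rwa [this] at hlim
  rcases lt_trichotomy x m with hxm | hxm | hmx
  · have hle : ⋂ l, S l ⊆ Iic m := fun z hz => ge_of_tendsto hlim <| by
      filter_upwards [hlim.eventually (lt_mem_nhds hxm)] with l hl
      rcases hside l with h | h
      · exact (h (mem_iInter.1 hz (l + 1))).le
      · exact absurd (h (hx (l + 1))) (not_le.2 hl)
    exact absurd (measure_Ico_setAverage_eq_zero hν hSm (ordConnected_iInter hconn) h0 hle hxS)
      (hright m hxm)
  · exact hxm.symm
  · have hge : ⋂ l, S l ⊆ Ici m := fun z hz => le_of_tendsto hlim <| by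
      filter_upwards [hlim.eventually (gt_mem_nhds hmx)] with l hl
      rcases hside l with h | h
      · exact absurd (h (hx (l + 1))) (not_lt.2 hl.le)
      · exact h (mem_iInter.1 hz (l + 1))
    exact absurd (measure_Ioc_setAverage_eq_zero hν hSm (ordConnected_iInter hconn) h0 hge hxS)
      (hleft m hmx)

end NestedIntervals

section Partition

variable {ν : Measure ℝ}

lemma ebary_of_measure_eq_zero {a b : EReal} (h : ν (Real.toEReal ⁻¹' Ico a b) = 0) :
    ebary ν a b = a :=
  if_pos h

lemma ebary_eq_setAverage {a b : EReal} (h : ν (Real.toEReal ⁻¹' Ico a b) ≠ 0) :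
    ebary ν a b = ((⨍ r in Real.toEReal ⁻¹' Ico a b, r ∂ν : ℝ) : EReal) := by
  rw [setAverage_eq, smul_eq_mul, measureReal_def, ← div_eq_inv_mul]
  exact if_neg h

lemma ebary_mem_Icc [IsFiniteMeasure ν] (hν : Integrable (fun r : ℝ => r) ν) {a b : EReal}
    (hab : a ≤ b) : ebary ν a b ∈ Icc a b := by
  by_cases h : ν (Real.toEReal ⁻¹' Ico a b) = 0
  · rw [ebary_of_measure_eq_zero h]
    exact ⟨le_rfl, hab⟩
  · have hm := setAverage_mem_of_ordConnected hν (measurable_coe_real_ereal measurableSet_Ico)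
      (ordConnected_Ico.preimage_mono EReal.coe_strictMono.monotone) h
    rw [ebary_eq_setAverage h]
    exact ⟨hm.1, hm.2.le⟩

lemma pts_two_mul (ν : Measure ℝ) (l i : ℕ) : pts ν (l + 1) (2 * i) = pts ν l i := by
  simp [pts]

lemma pts_two_mul_add_one (ν : Measure ℝ) (l i : ℕ) :
    pts ν (l + 1) (2 * i + 1) = ebary ν (pts ν l i) (pts ν l (i + 1)) := by
  simp [pts, Nat.add_mod, Nat.add_div]

lemma monotone_pts [IsFiniteMeasure ν] (hν : Integrable (fun r : ℝ => r) ν) (l : ℕ) :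
    Monotone (pts ν l) := by
  induction l with
  | zero =>
    refine monotone_nat_of_le_succ fun i => ?_
    cases i <;> simp [pts]
  | succ l ih =>
    refine monotone_nat_of_le_succ fun i => ?_
    obtain ⟨k, rfl | rfl⟩ := Nat.even_or_odd' i
    · rw [pts_two_mul, pts_two_mul_add_one]
      exact (ebary_mem_Icc hν (ih k.le_succ)).1
    · rw [pts_two_mul_add_one, show 2 * k + 1 + 1 = 2 * (k + 1) by ring, pts_two_mul]
      exact (ebary_mem_Icc hν (ih k.le_succ)).2

lemma seg_eq_preimage (ν : Measure ℝ) (l i : ℕ) :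
    seg ν l i = Real.toEReal ⁻¹' Ico (pts ν l i) (pts ν l (i + 1)) := rfl

lemma measurableSet_seg (ν : Measure ℝ) (l i : ℕ) : MeasurableSet (seg ν l i) :=
  measurable_coe_real_ereal measurableSet_Ico

lemma ordConnected_seg (ν : Measure ℝ) (l i : ℕ) : (seg ν l i).OrdConnected :=
  ordConnected_Ico.preimage_mono EReal.coe_strictMono.monotone

variable [IsFiniteMeasure ν] (hν : Integrable (fun r : ℝ => r) ν)
include hν

lemma seg_eq_union (l i : ℕ) : seg ν l i = seg ν (l + 1) (2 * i) ∪ seg ν (l + 1) (2 * i + 1) := by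
  have hmono := monotone_pts hν (l + 1)
  rw [seg_eq_preimage, seg_eq_preimage, seg_eq_preimage, ← preimage_union,
    Ico_union_Ico_eq_Ico (hmono (2 * i).le_succ) (hmono (2 * i + 1).le_succ),
    ← pts_two_mul ν l i, ← pts_two_mul ν l (i + 1)]
  rfl

lemma disjoint_seg {l i j : ℕ} (hij : i ≠ j) : Disjoint (seg ν l i) (seg ν l j) := by
  wlog h : i < j generalizing i j
  · exact (this hij.symm (by omega)).symm
  exact disjoint_left.2 fun x hi hj =>
    absurd hj.1 (not_le.2 (hi.2.trans_le (monotone_pts hν l h)))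

lemma exists_mem_seg {x : ℝ} (hx : 0 ≤ x) (l : ℕ) : ∃ i < 2 ^ l, x ∈ seg ν l i := by
  induction l with
  | zero => exact ⟨0, by norm_num, by simpa [seg, pts] using hx⟩
  | succ l ih =>
    obtain ⟨i, hi, hxi⟩ := ih
    rcases (seg_eq_union hν l i ▸ hxi) with h | h
    · exact ⟨2 * i, by omega, h⟩
    · exact ⟨2 * i + 1, by omega, h⟩

end Partition

section Cells

variable {ν : Measure ℝ}

lemma seg_two_mul_subset_Iio {l i : ℕ} (h : ν (seg ν l i) ≠ 0) :
    seg ν (l + 1) (2 * i) ⊆ Iio (⨍ r in seg ν l i, r ∂ν) := fun _ hx => by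
  have := hx.2
  rwa [pts_two_mul_add_one, ebary_eq_setAverage h, EReal.coe_lt_coe_iff] at this

lemma seg_two_mul_add_one_subset_Ici {l i : ℕ} (h : ν (seg ν l i) ≠ 0) :
    seg ν (l + 1) (2 * i + 1) ⊆ Ici (⨍ r in seg ν l i, r ∂ν) := fun _ hx => by
  have := hx.1
  rwa [pts_two_mul_add_one, ebary_eq_setAverage h, EReal.coe_le_coe_iff] at this

noncomputable def cellBarycenter (ν : Measure ℝ) (l : ℕ) (x : ℝ) : ℝ :=
  ∑ i ∈ Finset.range (2 ^ l), (seg ν l i).indicator (fun _ => ⨍ r in seg ν l i, r ∂ν) x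

lemma measurable_cellBarycenter (ν : Measure ℝ) (l : ℕ) : Measurable (cellBarycenter ν l) :=
  Finset.measurable_sum _ fun i _ => measurable_const.indicator (measurableSet_seg ν l i)

variable [IsFiniteMeasure ν] (hν : Integrable (fun r : ℝ => r) ν)
include hν

lemma eq_of_mem_seg {l i j : ℕ} {x : ℝ} (hi : x ∈ seg ν l i) (hj : x ∈ seg ν l j) : i = j := by
  by_contra hij
  exact disjoint_left.1 (disjoint_seg hν hij) hi hj

lemma cellBarycenter_eq {l i : ℕ} {x : ℝ} (hi : i < 2 ^ l) (hx : x ∈ seg ν l i) :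
    cellBarycenter ν l x = ⨍ r in seg ν l i, r ∂ν := by
  rw [cellBarycenter, Finset.sum_eq_single_of_mem i (Finset.mem_range.2 hi)
    fun j _ hji => indicator_of_notMem (fun hxj => hji (eq_of_mem_seg hν hxj hx)) _,
    indicator_of_mem hx]

theorem tendsto_cellBarycenter {x : ℝ} (hx : 0 ≤ x)
    (hcell : ∀ l i, x ∈ seg ν l i → ν (seg ν l i) ≠ 0)
    (hright : ∀ t, x < t → ν (Ico x t) ≠ 0) (hleft : ∀ t, t < x → ν (Ioc t x) ≠ 0) :
    Tendsto (fun l => cellBarycenter ν l x) atTop (𝓝 x) := by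
  choose I hI hxI using exists_mem_seg hν hx
  have hchild : ∀ l, I (l + 1) = 2 * I l ∨ I (l + 1) = 2 * I l + 1 := fun l => by
    rcases seg_eq_union hν l (I l) ▸ hxI l with h | h
    · exact Or.inl (eq_of_mem_seg hν (hxI (l + 1)) h)
    · exact Or.inr (eq_of_mem_seg hν (hxI (l + 1)) h)
  have hpos : ∀ l, ν (seg ν l (I l)) ≠ 0 := fun l => hcell l (I l) (hxI l)
  simp_rw [cellBarycenter_eq hν (hI _) (hxI _)]
  refine tendsto_setAverage_of_antitone hν (fun l => measurableSet_seg ν l _)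
    (antitone_nat_of_succ_le fun l => ?_) (fun l => ordConnected_seg ν l _) hxI hpos
    (fun l => ?_) hright hleft
  · rw [seg_eq_union hν l (I l)]
    rcases hchild l with h | h <;> rw [h]
    exacts [subset_union_left, subset_union_right]
  · rcases hchild l with h | h <;> rw [h]
    exacts [Or.inl (seg_two_mul_subset_Iio (hpos l)),
      Or.inr (seg_two_mul_add_one_subset_Ici (hpos l))]

end Cells

section Approximation

lemma discreteApprox_eq (ν : Measure ℝ) (l : ℕ) :
    discreteApprox ν l =
      ∑ i ∈ Finset.range (2 ^ l), ν (seg ν l i) • Measure.dirac (⨍ r in seg ν l i, r ∂ν) := by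
  refine Finset.sum_congr rfl fun i _ => ?_
  by_cases h : ν (seg ν l i) = 0
  · simp [h]
  · rw [ebary_eq_setAverage h, EReal.toReal_coe]
    rfl

lemma integral_discreteApprox {ν : Measure ℝ} [IsFiniteMeasure ν]
    (hν : Integrable (fun r : ℝ => r) ν) (hsupp : ν (Iio 0) = 0) (l : ℕ)
    (f : BoundedContinuousFunction ℝ ℝ) :
    ∫ x, f x ∂(discreteApprox ν l) = ∫ x, f (cellBarycenter ν l x) ∂ν := by
  have hcover : ν.restrict (⋃ i ∈ Finset.range (2 ^ l), seg ν l i) = ν := by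
    refine Measure.restrict_eq_self_of_ae_mem ?_
    filter_upwards [measure_eq_zero_iff_ae_notMem.1 hsupp] with x hx
    obtain ⟨i, hi, hxi⟩ := exists_mem_seg hν (not_lt.1 hx) l
    exact mem_biUnion (Finset.mem_range.2 hi) hxi
  have hfM : Integrable (fun x => f (cellBarycenter ν l x)) ν :=
    (integrable_const ‖f‖).mono' (f.continuous.measurable.comp
      (measurable_cellBarycenter ν l)).aestronglyMeasurable
      (ae_of_all _ fun x => f.norm_coe_le_norm _)
  calc ∫ x, f x ∂(discreteApprox ν l)
      = ∑ i ∈ Finset.range (2 ^ l), ν.real (seg ν l i) * f (⨍ r in seg ν l i, r ∂ν) := by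
        rw [discreteApprox_eq, integral_finsetSum_measure fun i _ =>
          (f.integrable _).smul_measure (measure_ne_top ν _)]
        simp_rw [integral_smul_measure, integral_dirac, smul_eq_mul, measureReal_def]
    _ = ∑ i ∈ Finset.range (2 ^ l), ∫ x in seg ν l i, f (cellBarycenter ν l x) ∂ν := by
        refine Finset.sum_congr rfl fun i hi => ?_
        rw [setIntegral_congr_fun (measurableSet_seg ν l i)
          fun x hx => congrArg f (cellBarycenter_eq hν (Finset.mem_range.1 hi) hx),
          setIntegral_const, smul_eq_mul]
    _ = ∫ x, f (cellBarycenter ν l x) ∂ν := by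
        rw [← integral_biUnion_finset _ (fun i _ => measurableSet_seg ν l i)
          (fun i _ j _ hij => disjoint_seg hν hij) fun i _ => hfM.integrableOn, hcover]

end Approximation

section OneSidedSupport

variable (ν : Measure ℝ)

lemma ae_forall_measure_Ico_ne_zero : ∀ᵐ x ∂ν, ∀ t, x < t → ν (Ico x t) ≠ 0 := by
  set B := {x | ∃ t, x < t ∧ ν (Ico x t) = 0}
  -- a point of `B ∩ supp ν` is isolated from the right in `supp ν`
  have hB : ν (B ∩ ν.support) = 0 := by
    refine (measure_null_iff_singleton (s := B ∩ ν.support)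
      ((countable_setOfPred_isolated_right_within (s := ν.support)).mono ?_)).2
      fun x ⟨⟨t, hxt, ht⟩, _⟩ =>
        measure_mono_null (singleton_subset_iff.2 (left_mem_Ico.2 hxt)) ht
    rintro x ⟨⟨t, hxt, ht⟩, hx⟩
    refine ⟨hx, empty_mem_iff_bot.1 (mem_nhdsWithin.2 ⟨Iio t, isOpen_Iio, hxt, ?_⟩)⟩
    rintro z ⟨hzt, hz, hxz⟩
    exact Measure.subset_compl_support_of_isOpen isOpen_Ioo
      (measure_mono_null Ioo_subset_Ico_self ht) ⟨hxz, hzt⟩ hz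
  filter_upwards [ν.support_mem_ae, measure_eq_zero_iff_ae_notMem.1 hB] with x hx hxB t hxt ht
  exact hxB ⟨⟨t, hxt, ht⟩, hx⟩

lemma ae_forall_measure_Ioc_ne_zero : ∀ᵐ x ∂ν, ∀ t, t < x → ν (Ioc t x) ≠ 0 := by
  set B := {x | ∃ t, t < x ∧ ν (Ioc t x) = 0}
  have hB : ν (B ∩ ν.support) = 0 := by
    refine (measure_null_iff_singleton (s := B ∩ ν.support)
      ((countable_setOfPred_isolated_left_within (s := ν.support)).mono ?_)).2
      fun x ⟨⟨t, htx, ht⟩, _⟩ =>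
        measure_mono_null (singleton_subset_iff.2 (right_mem_Ioc.2 htx)) ht
    rintro x ⟨⟨t, htx, ht⟩, hx⟩
    refine ⟨hx, empty_mem_iff_bot.1 (mem_nhdsWithin.2 ⟨Ioi t, isOpen_Ioi, htx, ?_⟩)⟩
    rintro z ⟨hzt, hz, hzx⟩
    exact Measure.subset_compl_support_of_isOpen isOpen_Ioo
      (measure_mono_null Ioo_subset_Ioc_self ht) ⟨hzt, hzx⟩ hz
  filter_upwards [ν.support_mem_ae, measure_eq_zero_iff_ae_notMem.1 hB] with x hx hxB t htx ht
  exact hxB ⟨⟨t, htx, ht⟩, hx⟩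

end OneSidedSupport

lemma ae_forall_mem_measure_ne_zero {α ι : Type*} [MeasurableSpace α] [Countable ι]
    (μ : Measure α) (s : ι → Set α) : ∀ᵐ x ∂μ, ∀ i, x ∈ s i → μ (s i) ≠ 0 := by
  refine ae_all_iff.2 fun i => ?_
  by_cases h : μ (s i) = 0
  · filter_upwards [measure_eq_zero_iff_ae_notMem.1 h] with x hx hxi using absurd hxi hx
  · exact ae_of_all _ fun _ _ => h

/-- Lemma 4.3: if `ν` is a Borel probability measure on `[0,∞)` with finite first
moment, then the discrete barycentric approximations `ν_{l+1}` converge weakly to `ν`. -/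
theorem discreteApprox_tendsto_weakly (ν : Measure ℝ) [IsProbabilityMeasure ν]
    (hsupp : ν (Set.Iio 0) = 0)
    (hmom : Integrable (fun r : ℝ => r) ν) :
    ∀ f : BoundedContinuousFunction ℝ ℝ,
      Tendsto (fun l : ℕ => ∫ x, f x ∂(discreteApprox ν l)) atTop
        (nhds (∫ x, f x ∂ν)) := by
  intro f
  simp_rw [integral_discreteApprox hmom hsupp]
  refine tendsto_integral_of_dominated_convergence (fun _ => ‖f‖)
    (fun l => (f.continuous.measurable.comp (measurable_cellBarycenter ν l)).aestronglyMeasurable)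
    (integrable_const _) (fun l => ae_of_all _ fun x => f.norm_coe_le_norm _) ?_
  filter_upwards [measure_eq_zero_iff_ae_notMem.1 hsupp, ae_forall_measure_Ico_ne_zero ν,
    ae_forall_measure_Ioc_ne_zero ν,
    ae_forall_mem_measure_ne_zero ν fun p : ℕ × ℕ => seg ν p.1 p.2]
    with x hx hright hleft hcell
  exact (f.continuous.tendsto x).comp
    (tendsto_cellBarycenter hmom (not_lt.1 hx) (fun l i => hcell (l, i)) hright hleft)
end

section
/- Let α > 0 and let g : ℝ → [0,∞) be a Borel measurable α-excessive function for Brownian motion, i.e. (i) for every t > 0 and every x ∈ ℝ, ∫ g(y) d(N(x,t))(y) ≤ e^{αt} g(x), and (ii) for every x ∈ ℝ, e^{−αt} ∫ g(y) d(N(x,t))(y) → g(x) as t → 0⁺, where N(x,t) is the Gaussian measure on ℝ with mean x and variance t. Then there exists a non-negative concave function W : (0,∞) → [0,∞) such that g(x) = e^{−√(2α)·x} · W(e^{2√(2α)·x}) for every x ∈ ℝ. -/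
/-!
Write `γ = √(2α)`. The substitution `W(r) = √r · g(log r / (2γ))` turns the `α`-harmonic functions
`A e^{γx} + B e^{-γx}` of Brownian motion into the affine functions `A r + B`, so concavity of `W`
says that `g` lies above every `α`-harmonic function `v` that it dominates at two points `a < b`,
on all of `[a, b]`. For a continuous `h` with `P_s h ≤ e^{αs} h` for small `s` this is a maximum
principle: at an interior negative minimum `x₁` of `h - v`, the inequality
`P_s (h - v) x₁ ≤ e^{αs} (h - v) x₁` gains a margin of order `αs` from the discount, whereas the
mass of `N(x₁, s)` outside `[a, b]` only contributes a Gaussian tail `O(e^{-δ²/(2s)}) = o(s)`.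
The excessive function `g` need not be continuous, but its regularizations `e^{-αt} P_t g` are;
they inherit the supermedian inequality through the semigroup property and converge pointwise to
`g` as `t → 0⁺`, and concavity survives the limit.
-/

open MeasureTheory Set Filter ProbabilityTheory Real
open scoped NNReal ENNReal Topology

lemma lintegral_gaussianReal_add {f : ℝ → ℝ≥0∞} (hf : Measurable f) (x : ℝ) (s t : ℝ≥0) :
    ∫⁻ z, f z ∂gaussianReal x (s + t) = ∫⁻ y, ∫⁻ z, f z ∂gaussianReal y t ∂gaussianReal x s := by
  have hconv : gaussianReal x (s + t) = gaussianReal x s ∗ gaussianReal 0 t := by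
    rw [gaussianReal_conv_gaussianReal, add_zero]
  rw [hconv, Measure.lintegral_conv hf]
  refine lintegral_congr fun y => ?_
  rw [← lintegral_map hf (measurable_const_add y), gaussianReal_map_const_add, zero_add]

lemma integrable_gaussianReal_iff {f : ℝ → ℝ} {x : ℝ} {v : ℝ≥0} (hv : v ≠ 0) :
    Integrable f (gaussianReal x v) ↔ Integrable (fun y => gaussianPDFReal x v y • f y) := by
  rw [gaussianReal_of_var_ne_zero _ hv, integrable_withDensity_iff_integrable_smul'
    (measurable_gaussianPDF x v) (ae_of_all _ fun _ => gaussianPDF_lt_top)]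
  simp only [toReal_gaussianPDF]

lemma gaussianPDFReal_le_mul_gaussianPDFReal {v w : ℝ≥0} (hv : 0 < v) (hvw : v < w) (r : ℝ) :
    ∃ C : ℝ≥0, ∀ x x' y, |x - x'| ≤ r → gaussianPDFReal x v y ≤ C * gaussianPDFReal x' w y := by
  have hv' : (0 : ℝ) < v := hv
  have hvw' : (v : ℝ) < w := hvw
  have hw' : (0 : ℝ) < w := hv'.trans hvw'
  refine ⟨(√(w / v) * exp (r ^ 2 / (2 * (w - v)))).toNNReal, fun x x' y hx => ?_⟩
  -- `(a + b)² / w ≤ a² / v + b² / (w - v)`, a weighted Cauchy–Schwarz inequality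
  have hexp : -(y - x) ^ 2 / (2 * v) ≤ r ^ 2 / (2 * (w - v)) + -(y - x') ^ 2 / (2 * w) := by
    have hr : (x - x') ^ 2 ≤ r ^ 2 := sq_le_sq' (abs_le.1 hx).1 (abs_le.1 hx).2
    have hsub : 0 < (w : ℝ) - v := sub_pos.2 hvw'
    rw [div_add_div _ _ (by positivity) (by positivity),
      div_le_div_iff₀ (by positivity) (by positivity)]
    nlinarith [sq_nonneg ((w - v) * (y - x) - v * (x - x')), mul_pos hv' hw',
      mul_pos (mul_pos hv' hw') hsub]
  have hsqrt : (√(2 * π * v))⁻¹ = √(w / v) * (√(2 * π * w))⁻¹ := by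
    rw [sqrt_div hw'.le, sqrt_mul (by positivity) (v : ℝ), sqrt_mul (by positivity) (w : ℝ)]
    have : √(w : ℝ) ≠ 0 := by positivity
    field_simp
  rw [gaussianPDFReal, gaussianPDFReal, hsqrt, Real.coe_toNNReal _ (by positivity)]
  calc √(w / v) * (√(2 * π * w))⁻¹ * exp (-(y - x) ^ 2 / (2 * v))
      ≤ √(w / v) * (√(2 * π * w))⁻¹
          * (exp (r ^ 2 / (2 * (w - v))) * exp (-(y - x') ^ 2 / (2 * w))) := by
        rw [← exp_add]
        gcongr
    _ = _ := by ring

lemma gaussianReal_le_smul_gaussianReal {v w : ℝ≥0} (hv : 0 < v) (hvw : v < w) (r : ℝ) :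
    ∃ C : ℝ≥0, ∀ x x', |x - x'| ≤ r → gaussianReal x v ≤ (C : ℝ≥0∞) • gaussianReal x' w := by
  obtain ⟨C, hC⟩ := gaussianPDFReal_le_mul_gaussianPDFReal hv hvw r
  refine ⟨C, fun x x' hx => ?_⟩
  rw [gaussianReal_of_var_ne_zero _ hv.ne', gaussianReal_of_var_ne_zero _ (hv.trans hvw).ne',
    ← withDensity_smul' _ _ ENNReal.coe_ne_top]
  refine withDensity_mono (ae_of_all _ fun y => ?_)
  simp only [gaussianPDF, Pi.smul_apply, smul_eq_mul]
  rw [← ENNReal.ofReal_coe_nnreal, ← ENNReal.ofReal_mul C.coe_nonneg]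
  exact ENNReal.ofReal_le_ofReal (hC x x' y hx)

lemma MeasureTheory.Integrable.gaussianReal_of_lt {f : ℝ → ℝ} {x₀ : ℝ} {v w : ℝ≥0}
    (hf : Integrable f (gaussianReal x₀ w)) (hv : 0 < v) (hvw : v < w) (x : ℝ) :
    Integrable f (gaussianReal x v) := by
  obtain ⟨C, hC⟩ := gaussianReal_le_smul_gaussianReal hv hvw |x - x₀|
  exact (hf.smul_measure ENNReal.coe_ne_top).mono_measure (hC x x₀ le_rfl)

lemma integral_exp_mul_gaussianReal (c x : ℝ) (s : ℝ≥0) :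
    ∫ y, exp (c * y) ∂gaussianReal x s = exp (c * x + c ^ 2 * s / 2) := by
  have := congrFun (mgf_id_gaussianReal (μ := x) (v := s)) c
  simp only [mgf, id] at this
  rw [this]
  ring_nf

lemma integrable_exp_mul_sub (c x : ℝ) (s : ℝ≥0) :
    Integrable (fun y => exp (c * (y - x))) (gaussianReal x s) := by
  simp_rw [mul_sub, sub_eq_add_neg, exp_add]
  exact (integrable_exp_mul_gaussianReal c).mul_const _

lemma integral_exp_mul_sub_gaussianReal (c x : ℝ) (s : ℝ≥0) :
    ∫ y, exp (c * (y - x)) ∂gaussianReal x s = exp (c ^ 2 * s / 2) := by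
  simp_rw [mul_sub, sub_eq_add_neg, exp_add]
  rw [integral_mul_const, integral_exp_mul_gaussianReal, ← exp_add]
  ring_nf

lemma exp_mul_abs_le (c z : ℝ) : exp (c * |z|) ≤ exp (c * z) + exp (-c * z) := by
  rcases abs_cases z with ⟨h, -⟩ | ⟨h, -⟩ <;> rw [h]
  · exact le_add_of_nonneg_right (exp_pos _).le
  · rw [mul_neg, ← neg_mul]
    exact le_add_of_nonneg_left (exp_pos _).le

lemma integrable_exp_mul_abs_sub (c x : ℝ) (s : ℝ≥0) :
    Integrable (fun y => exp (c * |y - x|)) (gaussianReal x s) :=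
  ((integrable_exp_mul_sub c x s).add (integrable_exp_mul_sub (-c) x s)).mono' (by fun_prop)
    (ae_of_all _ fun y => (norm_of_nonneg (exp_pos _).le).trans_le (exp_mul_abs_le c (y - x)))

lemma integral_exp_mul_abs_sub_le (c x : ℝ) (s : ℝ≥0) :
    ∫ y, exp (c * |y - x|) ∂gaussianReal x s ≤ 2 * exp (c ^ 2 * s / 2) := by
  calc ∫ y, exp (c * |y - x|) ∂gaussianReal x s
      ≤ ∫ y, exp (c * (y - x)) + exp (-c * (y - x)) ∂gaussianReal x s :=
        integral_mono (integrable_exp_mul_abs_sub c x s)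
          ((integrable_exp_mul_sub c x s).add (integrable_exp_mul_sub (-c) x s))
          fun y => exp_mul_abs_le c (y - x)
    _ = 2 * exp (c ^ 2 * s / 2) := by
        rw [integral_add (integrable_exp_mul_sub c x s) (integrable_exp_mul_sub (-c) x s),
          integral_exp_mul_sub_gaussianReal, integral_exp_mul_sub_gaussianReal, neg_sq, two_mul]

noncomputable def heatSemigroup (t : ℝ≥0) (g : ℝ → ℝ) (x : ℝ) : ℝ :=
  ∫ y, g y ∂gaussianReal x t

lemma continuous_heatSemigroup {g : ℝ → ℝ} (hg : Measurable g) {t w : ℝ≥0} (ht : 0 < t)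
    (htw : t < w) (hint : ∀ x, Integrable g (gaussianReal x w)) :
    Continuous (heatSemigroup t g) := by
  refine continuous_iff_continuousAt.2 fun x₀ => ?_
  obtain ⟨C, hC⟩ := gaussianPDFReal_le_mul_gaussianPDFReal ht htw 1
  rw [show heatSemigroup t g = fun x => ∫ y, gaussianPDFReal x t y • g y from
    funext fun x => integral_gaussianReal_eq_integral_smul ht.ne']
  refine continuousAt_of_dominated (bound := fun y => C * ‖gaussianPDFReal x₀ w y • g y‖)
    (Eventually.of_forall fun x => ((measurable_gaussianPDFReal x t).smul hg).aestronglyMeasurable)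
    ?_ (((integrable_gaussianReal_iff (ht.trans htw).ne').1 (hint x₀)).norm.const_mul _)
    (ae_of_all _ fun y => by unfold gaussianPDFReal; fun_prop)
  filter_upwards [Metric.closedBall_mem_nhds x₀ one_pos] with x hx
  refine ae_of_all _ fun y => ?_
  simp only [norm_smul, norm_of_nonneg (gaussianPDFReal_nonneg _ _ _), ← mul_assoc]
  exact mul_le_mul_of_nonneg_right (hC x x₀ y hx) (norm_nonneg _)

section Nonneg

variable {g : ℝ → ℝ}

lemma heatSemigroup_nonneg (hg0 : ∀ x, 0 ≤ g x) (t : ℝ≥0) (x : ℝ) : 0 ≤ heatSemigroup t g x :=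
  integral_nonneg hg0

lemma heatSemigroup_eq_toReal_lintegral (hg : Measurable g) (hg0 : ∀ x, 0 ≤ g x) (t : ℝ≥0)
    (x : ℝ) : heatSemigroup t g x = (∫⁻ y, ENNReal.ofReal (g y) ∂gaussianReal x t).toReal :=
  integral_eq_lintegral_of_nonneg_ae (ae_of_all _ hg0) hg.aestronglyMeasurable

lemma measurable_heatSemigroup (hg : Measurable g) (hg0 : ∀ x, 0 ≤ g x) (t : ℝ≥0) :
    Measurable (heatSemigroup t g) := by
  simp_rw [funext (heatSemigroup_eq_toReal_lintegral hg hg0 t)]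
  exact ((Measure.measurable_lintegral hg.ennreal_ofReal).comp (by fun_prop)).ennreal_toReal

lemma lintegral_ofReal_heatSemigroup (hg : Measurable g) (hg0 : ∀ x, 0 ≤ g x) {t : ℝ≥0}
    (hint : ∀ y, Integrable g (gaussianReal y t)) (s : ℝ≥0) (x : ℝ) :
    ∫⁻ y, ENNReal.ofReal (heatSemigroup t g y) ∂gaussianReal x s
      = ∫⁻ z, ENNReal.ofReal (g z) ∂gaussianReal x (s + t) := by
  rw [lintegral_gaussianReal_add hg.ennreal_ofReal]
  exact lintegral_congr fun y => ofReal_integral_eq_lintegral_ofReal (hint y) (ae_of_all _ hg0)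

lemma heatSemigroup_heatSemigroup (hg : Measurable g) (hg0 : ∀ x, 0 ≤ g x) {t : ℝ≥0}
    (hint : ∀ y, Integrable g (gaussianReal y t)) (s : ℝ≥0) (x : ℝ) :
    heatSemigroup s (heatSemigroup t g) x = heatSemigroup (s + t) g x := by
  rw [heatSemigroup_eq_toReal_lintegral (measurable_heatSemigroup hg hg0 t)
    (heatSemigroup_nonneg hg0 t), lintegral_ofReal_heatSemigroup hg hg0 hint,
    heatSemigroup_eq_toReal_lintegral hg hg0]

lemma integrable_heatSemigroup (hg : Measurable g) (hg0 : ∀ x, 0 ≤ g x) {s t : ℝ≥0} {x : ℝ}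
    (hint : ∀ y, Integrable g (gaussianReal y t))
    (hint' : Integrable g (gaussianReal x (s + t))) :
    Integrable (heatSemigroup t g) (gaussianReal x s) := by
  refine ⟨(measurable_heatSemigroup hg hg0 t).aestronglyMeasurable, ?_⟩
  rw [hasFiniteIntegral_iff_ofReal (ae_of_all _ (heatSemigroup_nonneg hg0 t)),
    lintegral_ofReal_heatSemigroup hg hg0 hint,
    ← ofReal_integral_eq_lintegral_ofReal hint' (ae_of_all _ hg0)]
  exact ENNReal.ofReal_lt_top

lemma heatSemigroup_add_le (hg : Measurable g) (hg0 : ∀ x, 0 ≤ g x) {α : ℝ} {s t : ℝ≥0}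
    {x : ℝ} (hexc : ∀ y, heatSemigroup s g y ≤ exp (α * s) * g y)
    (hint : ∀ y, Integrable g (gaussianReal y s)) (hint' : Integrable g (gaussianReal x t)) :
    heatSemigroup (t + s) g x ≤ exp (α * s) * heatSemigroup t g x := by
  rw [← heatSemigroup_heatSemigroup hg hg0 hint]
  calc heatSemigroup t (heatSemigroup s g) x ≤ ∫ y, exp (α * s) * g y ∂gaussianReal x t :=
        integral_mono_of_nonneg (ae_of_all _ (heatSemigroup_nonneg hg0 s))
          (hint'.const_mul _) (ae_of_all _ hexc)
    _ = exp (α * s) * heatSemigroup t g x := integral_const_mul _ _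

lemma heatSemigroup_discounted_le (hg : Measurable g) (hg0 : ∀ x, 0 ≤ g x) {α : ℝ}
    {s t : ℝ≥0} (hexc : ∀ y, heatSemigroup s g y ≤ exp (α * s) * g y)
    (hint_s : ∀ y, Integrable g (gaussianReal y s)) (hint_t : ∀ y, Integrable g (gaussianReal y t))
    (x : ℝ) :
    heatSemigroup s (fun y => exp (-(α * t)) * heatSemigroup t g y) x
      ≤ exp (α * s) * (exp (-(α * t)) * heatSemigroup t g x) := by
  rw [heatSemigroup, integral_const_mul, ← heatSemigroup, heatSemigroup_heatSemigroup hg hg0 hint_t,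
    add_comm, mul_left_comm]
  exact mul_le_mul_of_nonneg_left (heatSemigroup_add_le hg hg0 hexc hint_s (hint_t x))
    (exp_pos _).le

end Nonneg

noncomputable def expCombination (γ A B x : ℝ) : ℝ :=
  A * exp (γ * x) + B * exp (-(γ * x))

lemma continuous_expCombination (γ A B : ℝ) : Continuous (expCombination γ A B) := by
  unfold expCombination
  fun_prop

lemma integrable_expCombination (γ A B x : ℝ) (s : ℝ≥0) :
    Integrable (expCombination γ A B) (gaussianReal x s) := by
  unfold expCombination
  simp_rw [← neg_mul]
  exact ((integrable_exp_mul_gaussianReal γ).const_mul A).add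
    ((integrable_exp_mul_gaussianReal (-γ)).const_mul B)

lemma heatSemigroup_expCombination {α γ : ℝ} (hγ : γ ^ 2 = 2 * α) (A B : ℝ) (s : ℝ≥0)
    (x : ℝ) : heatSemigroup s (expCombination γ A B) x = exp (α * s) * expCombination γ A B x := by
  simp_rw [heatSemigroup, expCombination, ← neg_mul]
  rw [integral_add ((integrable_exp_mul_gaussianReal γ).const_mul A)
    ((integrable_exp_mul_gaussianReal (-γ)).const_mul B), integral_const_mul, integral_const_mul,
    integral_exp_mul_gaussianReal, integral_exp_mul_gaussianReal, neg_sq, hγ]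
  simp only [exp_add]
  ring_nf

lemma expCombination_le (γ A B x y : ℝ) :
    expCombination γ A B y ≤ (|A| + |B|) * exp (|γ| * |x|) * exp (|γ| * |y - x|) := by
  have hy : |y| ≤ |x| + |y - x| := by simpa using abs_add_le x (y - x)
  have hexp : ∀ z, |z| ≤ |γ| * |y| → exp z ≤ exp (|γ| * |x|) * exp (|γ| * |y - x|) := by
    intro z hz
    rw [← exp_add, ← mul_add]
    exact exp_le_exp.2 ((le_abs_self z).trans (hz.trans (by gcongr)))
  have hA := hexp (γ * y) (abs_mul γ y).le
  have hB := hexp (-(γ * y)) (by rw [abs_neg, abs_mul])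
  calc expCombination γ A B y ≤ |A| * exp (γ * y) + |B| * exp (-(γ * y)) := by
        unfold expCombination
        gcongr <;> exact le_abs_self _
    _ ≤ |A| * (exp (|γ| * |x|) * exp (|γ| * |y - x|))
          + |B| * (exp (|γ| * |x|) * exp (|γ| * |y - x|)) := by gcongr
    _ = _ := by ring

lemma eventually_mul_exp_neg_div_lt {K c δ : ℝ} (hK : 0 ≤ K) (hc : 0 < c) (hδ : δ ≠ 0) :
    ∀ᶠ s : ℝ≥0 in 𝓝[>] 0, K * exp (-(δ ^ 2 / (2 * s))) < c * s := by
  have hε : (0 : ℝ) < c * δ ^ 4 / (8 * (K + 1)) := by positivity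
  filter_upwards [Ioo_mem_nhdsGT (Real.toNNReal_pos.2 hε)] with s ⟨hs, hsε⟩
  replace hs : (0 : ℝ) < s := hs
  replace hsε : (s : ℝ) < c * δ ^ 4 / (8 * (K + 1)) := by
    simpa using (Real.lt_toNNReal_iff_coe_lt).1 hsε
  have hexp : exp (-(δ ^ 2 / (2 * s))) ≤ 8 * s ^ 2 / δ ^ 4 := by
    have := pow_div_factorial_le_exp (x := δ ^ 2 / (2 * s)) (by positivity) 2
    rw [exp_neg, inv_le_comm₀ (exp_pos _) (by positivity)]
    refine le_of_eq_of_le ?_ this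
    rw [Nat.factorial_two, Nat.cast_two]
    field_simp
    ring
  calc K * exp (-(δ ^ 2 / (2 * s))) ≤ K * (8 * s ^ 2 / δ ^ 4) := by gcongr
    _ < c * s := by
      rw [lt_div_iff₀ (by positivity)] at hsε
      rw [mul_div_assoc', div_lt_iff₀ (by positivity)]
      nlinarith

section MaximumPrinciple

variable {α γ : ℝ} {h : ℝ → ℝ} {A B : ℝ}

lemma le_sub_expCombination_of_isMinOn (h0 : ∀ x, 0 ≤ h x) {a b x₁ : ℝ}
    (hmin : IsMinOn (h - expCombination γ A B) (Icc a b) x₁)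
    (hx₁ : h x₁ ≤ expCombination γ A B x₁) {δ β : ℝ} (hδa : δ ≤ x₁ - a)
    (hδb : δ ≤ b - x₁) (hβ : 0 ≤ β) (y : ℝ) :
    h x₁ - expCombination γ A B x₁
        - (|A| + |B|) * exp (|γ| * |x₁|) * exp (-(β * δ)) * exp ((|γ| + β) * |y - x₁|)
      ≤ h y - expCombination γ A B y := by
  have hD : 0 ≤ (|A| + |B|) * exp (|γ| * |x₁|) := by positivity
  by_cases hy : y ∈ Icc a b
  · have := isMinOn_iff.1 hmin y hy
    simp only [Pi.sub_apply] at this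
    linarith [mul_nonneg (mul_nonneg hD (exp_pos (-(β * δ))).le)
      (exp_pos ((|γ| + β) * |y - x₁|)).le]
  have hδy : δ ≤ |y - x₁| := by
    rw [mem_Icc, not_and_or, not_le, not_le] at hy
    rcases hy with hy | hy
    · exact hδa.trans (by rw [abs_sub_comm]; exact le_abs.2 (Or.inl (by linarith)))
    · exact hδb.trans (le_abs.2 (Or.inl (by linarith)))
  -- outside `[a, b]` the distance to `x₁` is at least `δ`, which pays for the factor `e^{-βδ}`
  have htail : exp (|γ| * |y - x₁|) ≤ exp (-(β * δ)) * exp ((|γ| + β) * |y - x₁|) := by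
    rw [← exp_add]
    exact exp_le_exp.2 (by nlinarith)
  have := mul_le_mul_of_nonneg_left htail hD
  have := expCombination_le γ A B x₁ y
  linarith [h0 y]

lemma expCombination_sub_mul_exp_sub_one_le (hγ : γ ^ 2 = 2 * α) {s : ℝ≥0} {x₁ K c : ℝ}
    (hint : Integrable h (gaussianReal x₁ s)) (hsup : heatSemigroup s h x₁ ≤ exp (α * s) * h x₁)
    (hK : 0 ≤ K) (hlow : ∀ y, h x₁ - expCombination γ A B x₁ - K * exp (c * |y - x₁|)
      ≤ h y - expCombination γ A B y) :
    (expCombination γ A B x₁ - h x₁) * (exp (α * s) - 1) ≤ 2 * K * exp (c ^ 2 * s / 2) := by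
  have hI := integral_mono (((integrable_const _).sub
    ((integrable_exp_mul_abs_sub c x₁ s).const_mul K)))
    (hint.sub (integrable_expCombination γ A B x₁ s)) hlow
  simp only [Pi.sub_apply] at hI
  rw [integral_sub (integrable_const _) ((integrable_exp_mul_abs_sub c x₁ s).const_mul _),
    integral_sub hint (integrable_expCombination γ A B x₁ s), integral_const, integral_const_mul,
    probReal_univ, one_smul] at hI
  have hV := heatSemigroup_expCombination hγ A B s x₁
  have hT := mul_le_mul_of_nonneg_left (integral_exp_mul_abs_sub_le c x₁ s) hK
  simp only [heatSemigroup] at hV hsup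
  nlinarith [exp_pos (α * s)]

theorem expCombination_le_of_supermedian (hα : 0 < α) (hγ : γ ^ 2 = 2 * α)
    (hc : Continuous h) (h0 : ∀ x, 0 ≤ h x) {σ : ℝ≥0} (hσ : 0 < σ)
    (hint : ∀ s : ℝ≥0, 0 < s → s < σ → ∀ x, Integrable h (gaussianReal x s))
    (hsup : ∀ s : ℝ≥0, 0 < s → s < σ → ∀ x, heatSemigroup s h x ≤ exp (α * s) * h x)
    {a b : ℝ} (ha : expCombination γ A B a ≤ h a) (hb : expCombination γ A B b ≤ h b) {x : ℝ}
    (hx : x ∈ Icc a b) : expCombination γ A B x ≤ h x := by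
  by_contra! hlt
  obtain ⟨x₁, hx₁, hmin⟩ := isCompact_Icc.exists_isMinOn ⟨x, hx⟩
    (hc.sub (continuous_expCombination γ A B)).continuousOn
  set m := expCombination γ A B x₁ - h x₁
  have hm : 0 < m := by
    have := isMinOn_iff.1 hmin x hx
    simp only [Pi.sub_apply] at this
    linarith
  have hx₁a : a < x₁ := lt_of_le_of_ne hx₁.1 (by rintro rfl; linarith)
  have hx₁b : x₁ < b := lt_of_le_of_ne hx₁.2 (by rintro rfl; linarith)
  set δ := min (x₁ - a) (b - x₁)
  have hδ : 0 < δ := lt_min (sub_pos.2 hx₁a) (sub_pos.2 hx₁b)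
  set D := (|A| + |B|) * exp (|γ| * |x₁|)
  have hD : 0 ≤ D := by positivity
  -- Chernoff's choice `β = δ / s` in the tail estimate
  have key : ∀ s : ℝ≥0, 0 < s → s < σ →
      m * (exp (α * s) - 1) ≤ 2 * D * exp (-(δ ^ 2 / (2 * s)) + |γ| * δ + α * s) := by
    intro s hs hsσ
    have hs' : (0 : ℝ) < s := hs
    have hexpo : -(δ / s * δ) + (|γ| + δ / s) ^ 2 * s / 2
        = -(δ ^ 2 / (2 * s)) + |γ| * δ + α * s := by
      field_simp
      linear_combination (s : ℝ) ^ 2 * (sq_abs γ).trans hγ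
    have := expCombination_sub_mul_exp_sub_one_le hγ (hint s hs hsσ x₁) (hsup s hs hsσ x₁)
      (by positivity) (le_sub_expCombination_of_isMinOn h0 hmin (sub_nonneg.1 hm.le)
        (min_le_left _ _) (min_le_right _ _) (by positivity : 0 ≤ δ / s))
    rw [← hexpo, exp_add, ← mul_assoc, mul_assoc 2 D]
    linarith
  obtain ⟨s, hsmall, hs, hsσ⟩ := ((eventually_mul_exp_neg_div_lt
    (by positivity : 0 ≤ 2 * D * exp (|γ| * δ + α)) (mul_pos hm hα) hδ.ne').and
    (Ioo_mem_nhdsGT (lt_min hσ one_pos))).exists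
  have hs1 : (s : ℝ) ≤ 1 := by exact_mod_cast hsσ.le.trans (min_le_right _ _)
  have := key s hs (hsσ.trans_le (min_le_left _ _))
  have : exp (-(δ ^ 2 / (2 * s)) + |γ| * δ + α * s)
      ≤ exp (|γ| * δ + α) * exp (-(δ ^ 2 / (2 * s))) := by
    rw [← exp_add]
    exact exp_le_exp.2 (by nlinarith)
  have := add_one_le_exp (α * s)
  nlinarith

end MaximumPrinciple

noncomputable def expTransform (γ : ℝ) (h : ℝ → ℝ) (r : ℝ) : ℝ :=
  √r * h (log r / (2 * γ))

lemma expTransform_exp {γ : ℝ} (hγ : γ ≠ 0) (h : ℝ → ℝ) (x : ℝ) :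
    expTransform γ h (exp (2 * γ * x)) = exp (γ * x) * h x := by
  rw [expTransform, ← exp_half, log_exp]
  congr 2
  · ring
  · field_simp

lemma expCombination_le_iff {γ : ℝ} (hγ : γ ≠ 0) {h : ℝ → ℝ} {A B x : ℝ} :
    expCombination γ A B x ≤ h x ↔
      A * exp (2 * γ * x) + B ≤ expTransform γ h (exp (2 * γ * x)) := by
  have hexp : exp (γ * x) * expCombination γ A B x = A * exp (2 * γ * x) + B := by
    rw [expCombination, mul_add, mul_left_comm, ← exp_add, mul_left_comm, ← exp_add,
      add_neg_cancel, exp_zero, mul_one]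
    ring_nf
  rw [expTransform_exp hγ, ← hexp, mul_le_mul_iff_right₀ (exp_pos _)]

theorem concaveOn_expTransform {γ : ℝ} (hγ : 0 < γ) {h : ℝ → ℝ}
    (H : ∀ a b A B, a < b → expCombination γ A B a ≤ h a → expCombination γ A B b ≤ h b →
      ∀ x ∈ Icc a b, expCombination γ A B x ≤ h x) :
    ConcaveOn ℝ (Ioi 0) (expTransform γ h) := by
  refine LinearOrder.concaveOn_of_lt (convex_Ioi 0) fun r hr r' hr' hrr' p q hp hq hpq => ?_
  set W := expTransform γ h
  set L : ℝ → ℝ := fun ρ => log ρ / (2 * γ)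
  have hL : ∀ ρ ∈ Ioi (0 : ℝ), exp (2 * γ * L ρ) = ρ := fun ρ hρ => by
    rw [mul_div_cancel₀ _ (by positivity), exp_log hρ]
  have hchord : ∀ A B, ∀ ρ ∈ Ioi (0 : ℝ), expCombination γ A B (L ρ) ≤ h (L ρ) ↔ A * ρ + B ≤ W ρ :=
    fun A B ρ hρ => by rw [expCombination_le_iff hγ.ne', hL ρ hρ]
  have hLmono : ∀ ρ ∈ Ioi (0 : ℝ), ∀ ρ' ∈ Ioi (0 : ℝ), ρ ≤ ρ' → L ρ ≤ L ρ' := fun ρ hρ ρ' _ hρρ' =>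
    div_le_div_of_nonneg_right (log_le_log hρ hρρ') (by positivity)
  set z := p • r + q • r'
  have hz : z ∈ Icc r r' := by
    rw [← segment_eq_Icc hrr'.le]
    exact ⟨p, q, hp.le, hq.le, hpq, rfl⟩
  have hz0 : z ∈ Ioi (0 : ℝ) := lt_of_lt_of_le hr hz.1
  -- the chord of `W` through `(r, W r)` and `(r', W r')`
  set A := (W r' - W r) / (r' - r)
  set B := W r - A * r
  have hr'B : A * r' + B = W r' := by
    simp only [A, B]
    field_simp [(sub_pos.2 hrr').ne']
    ring
  have := H (L r) (L r') A B
    (div_lt_div_of_pos_right (log_lt_log hr hrr') (by positivity))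
    ((hchord A B r hr).2 (by simp [B])) ((hchord A B r' hr').2 hr'B.le) (L z)
    ⟨hLmono r hr z hz0 hz.1, hLmono z hz0 r' hr' hz.2⟩
  rw [hchord A B z hz0] at this
  calc p • W r + q • W r' = p * (A * r + B) + q * (A * r' + B) := by
        rw [hr'B]; simp only [B, smul_eq_mul]; ring
    _ = A * z + B := by simp only [z, smul_eq_mul]; linear_combination B * hpq
    _ ≤ W z := this

theorem ConcaveOn.of_tendsto {E ι : Type*} [AddCommMonoid E] [Module ℝ E] {s : Set E}
    {l : Filter ι} [l.NeBot] {F : ι → E → ℝ} {f : E → ℝ} (hs : Convex ℝ s)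
    (hF : ∀ᶠ i in l, ConcaveOn ℝ s (F i)) (hf : ∀ x ∈ s, Tendsto (fun i => F i x) l (𝓝 (f x))) :
    ConcaveOn ℝ s f :=
  ⟨hs, fun x hx y hy a b ha hb hab =>
    le_of_tendsto_of_tendsto (((hf x hx).const_smul a).add ((hf y hy).const_smul b))
      (hf _ (hs hx hy ha hb hab)) (hF.mono fun _ hi => hi.2 hx hy ha hb hab)⟩

theorem concaveOn_expTransform_of_supermedian {α : ℝ} (hα : 0 < α) {h : ℝ → ℝ}
    (hc : Continuous h) (h0 : ∀ x, 0 ≤ h x) {σ : ℝ≥0} (hσ : 0 < σ)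
    (hint : ∀ s : ℝ≥0, 0 < s → s < σ → ∀ x, Integrable h (gaussianReal x s))
    (hsup : ∀ s : ℝ≥0, 0 < s → s < σ → ∀ x, heatSemigroup s h x ≤ exp (α * s) * h x) :
    ConcaveOn ℝ (Ioi 0) (expTransform √(2 * α) h) :=
  concaveOn_expTransform (sqrt_pos.2 (by positivity)) fun _ _ _ _ _ ha hb _ hx =>
    expCombination_le_of_supermedian hα (sq_sqrt (by positivity)) hc h0 hσ hint hsup ha hb hx

theorem concaveOn_expTransform_discounted_heatSemigroup {α : ℝ} (hα : 0 < α) {g : ℝ → ℝ}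
    (hg : Measurable g) (hg0 : ∀ x, 0 ≤ g x)
    (hexc : ∀ s : ℝ≥0, 0 < s → ∀ x, heatSemigroup s g x ≤ exp (α * s) * g x) {t₀ : ℝ≥0}
    (hint : ∀ v : ℝ≥0, 0 < v → v < t₀ → ∀ x, Integrable g (gaussianReal x v)) {t : ℝ≥0}
    (ht : 0 < t) (htt₀ : t < t₀ / 2) :
    ConcaveOn ℝ (Ioi 0) (expTransform √(2 * α) fun x => exp (-(α * t)) * heatSemigroup t g x) := by
  have hhalf : t₀ / 2 < t₀ :=
    NNReal.half_lt_self (ht.trans_le (htt₀.le.trans (NNReal.half_le_self t₀))).ne'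
  have hlt : ∀ s < t₀ / 2, s < t₀ := fun s hs => hs.trans hhalf
  have hsum : ∀ s < t₀ / 2, s + t < t₀ := fun s hs => add_halves t₀ ▸ add_lt_add hs htt₀
  refine concaveOn_expTransform_of_supermedian hα
    ((continuous_heatSemigroup hg ht htt₀ (hint _ (ht.trans htt₀) hhalf)).const_mul _)
    (fun x => mul_nonneg (exp_pos _).le (heatSemigroup_nonneg hg0 t x)) (ht.trans htt₀)
    (fun s hs hst x => ?_) (fun s hs hst x => ?_)
  · exact (integrable_heatSemigroup hg hg0 (hint t ht (hlt t htt₀))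
      (hint _ (add_pos hs ht) (hsum s hst) x)).const_mul _
  · exact heatSemigroup_discounted_le hg hg0 (hexc s hs) (hint s hs (hlt s hst))
      (hint t ht (hlt t htt₀)) x

lemma exists_integrable_gaussianReal_of_tendsto {g : ℝ → ℝ} {x : ℝ} {c : ℝ≥0 → ℝ}
    (hlim : Tendsto (fun t => c t * ∫ y, g y ∂gaussianReal x t) (𝓝[>] 0) (𝓝 (g x)))
    (hx : g x ≠ 0) : ∃ t : ℝ≥0, 0 < t ∧ Integrable g (gaussianReal x t) := by
  by_contra! h
  refine hx (tendsto_nhds_unique (hlim.congr' ?_) tendsto_const_nhds)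
  filter_upwards [self_mem_nhdsWithin] with t ht
  rw [integral_undef (h t ht), mul_zero]

/-- Lemma 2.7: characterization of `α`-excessive functions of Brownian motion.
If `g : ℝ → [0,∞)` is Borel measurable and `α`-excessive for the Brownian
transition semigroup `P_t g (x) = ∫ g dN(x,t)` (with `N(x,t)` the Gaussian measure
with mean `x` and variance `t`), i.e. `P_t g ≤ e^{αt} g` for all `t > 0` and
`e^{-αt} P_t g → g` pointwise as `t → 0⁺`, then there is a non-negative concave
function `W` on `(0,∞)` with `g(x) = e^{-√(2α) x} W(e^{2√(2α) x})`. -/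
theorem excessive_brownian_repr (α : ℝ) (hα : 0 < α)
    (g : ℝ → ℝ) (hmeas : Measurable g) (hnonneg : ∀ x, 0 ≤ g x)
    (hexcessive : ∀ t : NNReal, 0 < t → ∀ x : ℝ,
      (∫ y, g y ∂(gaussianReal x t)) ≤ Real.exp (α * t) * g x)
    (hlimit : ∀ x : ℝ,
      Tendsto (fun t : NNReal => Real.exp (-(α * t)) * ∫ y, g y ∂(gaussianReal x t))
        (nhdsWithin 0 (Set.Ioi 0)) (nhds (g x))) :
    ∃ W : ℝ → ℝ, (∀ x ∈ Set.Ioi (0 : ℝ), 0 ≤ W x) ∧ ConcaveOn ℝ (Set.Ioi 0) W ∧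
      ∀ x : ℝ, g x = Real.exp (-(Real.sqrt (2 * α)) * x)
        * W (Real.exp (2 * Real.sqrt (2 * α) * x)) := by
  have hγ : √(2 * α) ≠ 0 := (sqrt_pos.2 (by positivity)).ne'
  refine ⟨expTransform √(2 * α) g, fun r _ => mul_nonneg (sqrt_nonneg r) (hnonneg _), ?_,
    fun x => by rw [expTransform_exp hγ, ← mul_assoc, ← exp_add, neg_mul, neg_add_cancel,
      exp_zero, one_mul]⟩
  rcases eq_or_ne g 0 with rfl | hg
  · rw [show expTransform √(2 * α) 0 = fun _ => 0 by ext; simp [expTransform]]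
    exact concaveOn_const _ (convex_Ioi _)
  obtain ⟨x₀, hx₀⟩ := Function.ne_iff.1 hg
  obtain ⟨t₀, ht₀, hint₀⟩ := exists_integrable_gaussianReal_of_tendsto (hlimit x₀) hx₀
  refine ConcaveOn.of_tendsto (F := fun t : ℝ≥0 => expTransform √(2 * α) fun x =>
    exp (-(α * t)) * heatSemigroup t g x) (convex_Ioi 0) ?_ fun r _ => (hlimit _).const_mul √r
  filter_upwards [Ioo_mem_nhdsGT (half_pos ht₀)] with t ⟨ht, htt₀⟩
  exact concaveOn_expTransform_discounted_heatSemigroup hα hmeas hnonneg hexcessive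
    (fun v hv hvt₀ => hint₀.gaussianReal_of_lt hv hvt₀) ht htt₀
end

section
/- Let σ be a Borel probability measure on [0,∞) with mean m := ∫ u dσ(u) ∈ (0,∞), and define c(r) = (∫ |u − r| dσ(u) + r + m)/2. Then for every s ∈ (0,m), the set of minimizers M(s) := argmin_{r>0} (c(r) − s)/r is nonempty and bounded, and the minimum value φ(s) := min_{r>0} (c(r) − s)/r satisfies 0 < φ(s) < 1. -/
/-!
Write `c r = π r + r` with `π r = ∫ (u - r)⁺ dσ` the stop-loss transform of `σ`. Then `c` is
continuous, `c r ≥ max m r`, and `c r - r = π r → 0`, so there is `R > 0` with `c R < R + s`.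
The slope `(c r - s) / r` therefore takes a value `L = (c R - s) / R ∈ (0, 1)`, while it is at
least `(m - s) / r` and at least `1 - s / r`; hence its sublevel set at `L` lies in the compact
interval `[(m - s) / L, s / (1 - L)] ⊂ (0, ∞)`, on which it attains its minimum.
-/

open MeasureTheory Set Filter Topology

theorem IsCompact.exists_isMinOn_of_sublevel_subset {α β : Type*} [LinearOrder α]
    [TopologicalSpace α] [ClosedIicTopology α] [TopologicalSpace β] {f : β → α} {S K : Set β}
    (hK : IsCompact K) (hKS : K ⊆ S) (hf : ContinuousOn f K) {x₀ : β} (hx₀ : x₀ ∈ S)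
    (hsub : ∀ x ∈ S, f x ≤ f x₀ → x ∈ K) : ∃ x ∈ S, IsMinOn f S x := by
  have hx₀K : x₀ ∈ K := hsub x₀ hx₀ le_rfl
  obtain ⟨x, hxK, hmin⟩ := hK.exists_isMinOn ⟨x₀, hx₀K⟩ hf
  refine ⟨x, hKS hxK, fun y hy => ?_⟩
  by_cases hyK : y ∈ K
  · exact hmin hyK
  · exact (hmin hx₀K).trans (not_le.mp (mt (hsub y hy) hyK)).le

section TangentSlope

variable {c : ℝ → ℝ} {m s : ℝ}

theorem mem_Icc_of_sub_div_le {y r L : ℝ} (hmy : m ≤ y) (hry : r ≤ y) (hr : 0 < r)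
    (hL0 : 0 < L) (hL1 : L < 1) (h : (y - s) / r ≤ L) :
    r ∈ Icc ((m - s) / L) (s / (1 - L)) := by
  rw [div_le_iff₀ hr] at h
  constructor
  · rw [div_le_iff₀ hL0]
    linarith
  · rw [le_div_iff₀ (sub_pos.2 hL1)]
    linarith

theorem sub_div_mem_Ioo {y r : ℝ} (hmy : m ≤ y) (hsm : s < m) (hr : 0 < r) (hy : y < r + s) :
    (y - s) / r ∈ Ioo 0 1 :=
  ⟨div_pos (by linarith) hr, (div_lt_one hr).2 (by linarith)⟩

theorem exists_isMinOn_sub_div (hc : Continuous c) (hcm : ∀ r, m ≤ c r) (hcr : ∀ r, r ≤ c r)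
    (hsm : s < m) {R : ℝ} (hR : 0 < R) (hRs : c R < R + s) :
    ∃ r₀ ∈ Ioi 0, IsMinOn (fun r => (c r - s) / r) (Ioi 0) r₀ := by
  set L := (c R - s) / R
  obtain ⟨hL0, hL1⟩ : L ∈ Ioo 0 1 := sub_div_mem_Ioo (hcm R) hsm hR hRs
  have ha : 0 < (m - s) / L := div_pos (by linarith) hL0
  refine isCompact_Icc.exists_isMinOn_of_sublevel_subset (fun r hr => ha.trans_le hr.1) ?_ hR
    fun r hr hrL => mem_Icc_of_sub_div_le (hcm r) (hcr r) hr hL0 hL1 hrL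
  exact (hc.sub continuous_const).continuousOn.div continuousOn_id
    fun r hr => (ha.trans_le hr.1).ne'

end TangentSlope

noncomputable def stopLoss (σ : Measure ℝ) (r : ℝ) : ℝ := ∫ u, max (u - r) 0 ∂σ

section StopLoss

variable {σ : Measure ℝ}

theorem stopLoss_nonneg (r : ℝ) : 0 ≤ stopLoss σ r :=
  integral_nonneg fun _ => le_max_right _ _

theorem integrable_max_sub [IsFiniteMeasure σ] (hint : Integrable (fun u : ℝ => u) σ) (r : ℝ) :
    Integrable (fun u => max (u - r) 0) σ :=
  (hint.sub (integrable_const r)).pos_part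

theorem tendsto_stopLoss_atTop [IsFiniteMeasure σ] (hint : Integrable (fun u : ℝ => u) σ) :
    Tendsto (stopLoss σ) atTop (𝓝 0) := by
  have hdom : ∀ᶠ r in atTop, ∀ᵐ u ∂σ, ‖max (u - r) 0‖ ≤ |u| := by
    filter_upwards [eventually_ge_atTop 0] with r hr
    refine ae_of_all _ fun u => ?_
    rw [Real.norm_of_nonneg (le_max_right _ _)]
    exact max_le (by linarith [le_abs_self u]) (abs_nonneg u)
  have hlim : ∀ u : ℝ, Tendsto (fun r => max (u - r) 0) atTop (𝓝 0) := fun u =>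
    tendsto_const_nhds.congr' <| (eventually_ge_atTop u).mono fun r hr =>
      (max_eq_right (by linarith)).symm
  have h := tendsto_integral_filter_of_dominated_convergence _
    (Eventually.of_forall fun r => (integrable_max_sub hint r).aestronglyMeasurable)
    hdom hint.abs (ae_of_all _ hlim)
  rwa [integral_zero] at h

variable [IsProbabilityMeasure σ]

theorem lipschitzWith_stopLoss (hint : Integrable (fun u : ℝ => u) σ) :
    LipschitzWith 1 (stopLoss σ) := by
  refine LipschitzWith.of_dist_le_mul fun r₁ r₂ => ?_
  rw [Real.dist_eq, Real.dist_eq, NNReal.coe_one, one_mul, stopLoss, stopLoss,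
    ← integral_sub (integrable_max_sub hint r₁) (integrable_max_sub hint r₂)]
  calc |∫ u, (max (u - r₁) 0 - max (u - r₂) 0) ∂σ|
      ≤ ∫ u, |max (u - r₁) 0 - max (u - r₂) 0| ∂σ := abs_integral_le_integral_abs
    _ ≤ ∫ _u, |r₁ - r₂| ∂σ := by
        refine integral_mono
          ((integrable_max_sub hint r₁).sub (integrable_max_sub hint r₂)).abs
          (integrable_const _) fun u => ?_
        simpa only [sub_sub_sub_cancel_left, abs_sub_comm] using
          abs_max_sub_max_le_abs (u - r₁) (u - r₂) 0
    _ = |r₁ - r₂| := by simp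

theorem integral_abs_sub (hint : Integrable (fun u : ℝ => u) σ) (r : ℝ) :
    ∫ u, |u - r| ∂σ = 2 * stopLoss σ r - ((∫ u, u ∂σ) - r) := by
  have habs : (fun u : ℝ => |u - r|) = fun u => 2 * max (u - r) 0 - (u - r) := by
    funext u
    rcases le_total (u - r) 0 with h | h
    · rw [abs_of_nonpos h, max_eq_right h]; ring
    · rw [abs_of_nonneg h, max_eq_left h]; ring
  have hsub : Integrable (fun u => u - r) σ := hint.sub (integrable_const r)
  rw [habs, integral_sub ((integrable_max_sub hint r).const_mul 2) hsub, integral_const_mul,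
    stopLoss]
  simp [integral_sub hint (integrable_const r)]

theorem integral_le_stopLoss_add (hint : Integrable (fun u : ℝ => u) σ) (r : ℝ) :
    ∫ u, u ∂σ ≤ stopLoss σ r + r := by
  have h := integral_mono hint ((integrable_max_sub hint r).add (integrable_const r))
    fun u => show u ≤ max (u - r) 0 + r by linarith [le_max_left (u - r) 0]
  simpa [integral_add (integrable_max_sub hint r) (integrable_const r), stopLoss] using h

end StopLoss

theorem potential_tangent_minimizers_general (σ : Measure ℝ) [IsProbabilityMeasure σ]
    (hint : Integrable (fun u : ℝ => u) σ)
    (m : ℝ) (hm : m = ∫ u, u ∂σ)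
    (c : ℝ → ℝ) (hc : ∀ r, c r = ((∫ u, |u - r| ∂σ) + r + m) / 2)
    (s : ℝ) (hs : s ∈ Set.Ioo 0 m)
    (M : Set ℝ)
    (hM : M = {r : ℝ | 0 < r ∧ ∀ r' : ℝ, 0 < r' → (c r - s) / r ≤ (c r' - s) / r'}) :
    M.Nonempty ∧ Bornology.IsBounded M ∧
      ∀ r ∈ M, 0 < (c r - s) / r ∧ (c r - s) / r < 1 := by
  obtain ⟨hs0, hsm⟩ := hs
  have hc_eq : ∀ r, c r = stopLoss σ r + r := fun r => by
    rw [hc, integral_abs_sub hint, ← hm]; ring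
  have hcm : ∀ r, m ≤ c r := fun r => by
    rw [hc_eq, hm]; exact integral_le_stopLoss_add hint r
  have hcr : ∀ r, r ≤ c r := fun r => by linarith [hc_eq r, stopLoss_nonneg (σ := σ) r]
  have hcont : Continuous c := by
    rw [funext hc_eq]; exact (lipschitzWith_stopLoss hint).continuous.add continuous_id
  obtain ⟨R, hRs, hR⟩ := ((tendsto_stopLoss_atTop hint).eventually
    (eventually_lt_nhds hs0)).and (eventually_gt_atTop 0) |>.exists
  have hcR : c R < R + s := by linarith [hc_eq R]
  obtain ⟨hL0, hL1⟩ := sub_div_mem_Ioo (hcm R) hsm hR hcR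
  obtain ⟨r₀, hr₀, hmin⟩ := exists_isMinOn_sub_div hcont hcm hcr hsm hR hcR
  subst hM
  refine ⟨⟨r₀, hr₀, fun r hr => hmin hr⟩, ?_, fun r ⟨hr, hrmin⟩ =>
    ⟨div_pos (by linarith [hcm r]) hr, (hrmin R hR).trans_lt hL1⟩⟩
  exact (Metric.isBounded_Icc _ _).subset fun r ⟨hr, hrmin⟩ =>
    mem_Icc_of_sub_div_le (hcm r) (hcr r) hr hL0 hL1 (hrmin R hR)

/-- For `s ∈ (0,m)`, the set of minimizers of `r ↦ (c(r) − s)/r` over `r > 0` is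
nonempty and bounded, and the minimum value `φ(s)` lies in `(0,1)`. Here
`c(r) = (∫ |u − r| dσ(u) + r + m)/2` is the potential function of a probability
measure `σ` on `[0,∞)` with mean `m ∈ (0,∞)`. -/
theorem potential_tangent_minimizers (σ : Measure ℝ) [IsProbabilityMeasure σ]
    (hsupp : σ (Set.Iio 0) = 0)
    (hint : Integrable (fun u : ℝ => u) σ)
    (m : ℝ) (hm : m = ∫ u, u ∂σ) (hmpos : 0 < m)
    (c : ℝ → ℝ) (hc : ∀ r, c r = ((∫ u, |u - r| ∂σ) + r + m) / 2)
    (s : ℝ) (hs : s ∈ Set.Ioo 0 m)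
    (M : Set ℝ)
    (hM : M = {r : ℝ | 0 < r ∧ ∀ r' : ℝ, 0 < r' → (c r - s) / r ≤ (c r' - s) / r'}) :
    M.Nonempty ∧ Bornology.IsBounded M ∧
      ∀ r ∈ M, 0 < (c r - s) / r ∧ (c r - s) / r < 1 :=
  potential_tangent_minimizers_general σ hint m hm c hc s hs M hM
end

section
/- Let σ be a Borel probability measure on [0,∞) with mean m := ∫ u dσ(u) ∈ (0,∞), define c(r) = (∫ |u − r| dσ(u) + r + m)/2, and for s ∈ (0,m) set φ(s) := min_{r>0} (c(r) − s)/r and ζ(s) := sup{r > 0 : (c(r) − s)/r = φ(s)}. Then φ is non-increasing on (0,m), and for every s ∈ (0,m) and every δ ∈ (0,s) one has φ(s − δ) ≤ φ(s) + δ/ζ(s); in particular, φ is Lipschitz on every closed subinterval of (0,m). -/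
/-!
Since `|u - r| = (r - u) + 2 (u - r)⁺`, we have `c r - r = ∫ (u - r)⁺ dσ`, and the triangle
inequality for integrals gives `c r ≥ max r m`; dominated convergence gives `c r - r → 0`. Hence
`0 < φ s < 1`, and every minimizer `r` of the slope at level `s` lies in
`[(m - s) / φ s, s / (1 - φ s)]`, so `ζ s` is a genuine supremum. As a minimum of functions
decreasing in `s`, `φ` is non-increasing. A minimizer `r` at level `s` has slope `φ s + δ / r` at
level `s - δ`, so `φ (s - δ) ≤ φ s + δ / r`; taking the supremum over minimizers gives the bound
with `ζ s`. On `[a, b]` the minimizers stay above `(m - b) / φ a`, which yields the Lipschitz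
constant `φ a / (m - b)`.
-/

open MeasureTheory Set Filter Topology

section Potential

variable {σ : Measure ℝ} [IsProbabilityMeasure σ]

lemma integral_sub_const_of_integrable (hint : Integrable (fun u : ℝ => u) σ) (r : ℝ) :
    ∫ u, (u - r) ∂σ = (∫ u, u ∂σ) - r := by
  rw [integral_sub hint (integrable_const r), integral_const, probReal_univ, one_smul]

lemma max_le_potential (hint : Integrable (fun u : ℝ => u) σ) (r : ℝ) :
    max r (∫ u, u ∂σ) ≤ ((∫ u, |u - r| ∂σ) + r + ∫ u, u ∂σ) / 2 := by
  have h : |(∫ u, u ∂σ) - r| ≤ ∫ u, |u - r| ∂σ :=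
    integral_sub_const_of_integrable hint r ▸ abs_integral_le_integral_abs
  rw [abs_le] at h
  exact max_le (by linarith) (by linarith)

lemma potential_sub_eq_integral (hint : Integrable (fun u : ℝ => u) σ) (r : ℝ) :
    ((∫ u, |u - r| ∂σ) + r + ∫ u, u ∂σ) / 2 - r = ∫ u, (|u - r| + (u - r)) / 2 ∂σ := by
  have hsub : Integrable (fun u : ℝ => u - r) σ := hint.sub (integrable_const r)
  rw [integral_div, integral_add hsub.abs hsub, integral_sub_const_of_integrable hint r]
  ring

lemma tendsto_potential_sub_atTop (hint : Integrable (fun u : ℝ => u) σ) :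
    Tendsto (fun r => ((∫ u, |u - r| ∂σ) + r + ∫ u, u ∂σ) / 2 - r) atTop (𝓝 0) := by
  simp_rw [potential_sub_eq_integral hint]
  have hzero : ∀ u r : ℝ, u ≤ r → (|u - r| + (u - r)) / 2 = 0 := fun u r h => by
    rw [abs_of_nonpos (sub_nonpos.2 h)]; ring
  have hbound : ∀ u r : ℝ, 0 ≤ r → ‖(|u - r| + (u - r)) / 2‖ ≤ |u| := fun u r hr => by
    rcases le_total u r with h | h
    · rw [hzero u r h, norm_zero]; exact abs_nonneg u
    · rw [abs_of_nonneg (sub_nonneg.2 h), Real.norm_eq_abs, abs_le]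
      constructor <;> linarith [le_abs_self u]
  simpa using tendsto_integral_filter_of_dominated_convergence (fun u => |u|)
    (Eventually.of_forall fun r => ((hint.sub (integrable_const r)).abs.add
      (hint.sub (integrable_const r))).div_const 2 |>.aestronglyMeasurable)
    ((eventually_ge_atTop 0).mono fun r hr => ae_of_all _ fun u => hbound u r hr) hint.abs
    (ae_of_all _ fun u => tendsto_const_nhds.congr'
      ((eventually_ge_atTop u).mono fun r hr => (hzero u r hr).symm))

end Potential

lemma le_add_div_csSup {S : Set ℝ} {x y δ : ℝ} (hne : S.Nonempty) (hbdd : BddAbove S)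
    (hpos : ∀ r ∈ S, 0 < r) (hδ : 0 ≤ δ) (h : ∀ r ∈ S, x ≤ y + δ / r) :
    x ≤ y + δ / sSup S := by
  obtain ⟨r₀, hr₀⟩ := hne
  have hsup : 0 < sSup S := (hpos r₀ hr₀).trans_le (le_csSup hbdd hr₀)
  by_contra! hlt
  have hxy : 0 < x - y := by linarith [div_nonneg hδ hsup.le]
  obtain ⟨r, hr, hltr⟩ := exists_lt_of_lt_csSup ⟨r₀, hr₀⟩ <|
    (div_lt_iff₀ hxy).2 <| by rwa [mul_comm, ← div_lt_iff₀ hsup, lt_sub_iff_add_lt']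
  have := h r hr
  rw [div_lt_iff₀ hxy, ← div_lt_iff₀' (hpos r hr)] at hltr
  linarith

section MinimalSlope

variable {c : ℝ → ℝ} {s t p q : ℝ}

lemma antitoneOn_of_isLeast_slope {φ : ℝ → ℝ} {I : Set ℝ}
    (hφ : ∀ s ∈ I, IsLeast ((fun r => (c r - s) / r) '' Ioi 0) (φ s)) : AntitoneOn φ I := by
  intro s hs t ht hst
  obtain ⟨r, hr, hrs⟩ := (hφ s hs).1
  calc φ t ≤ (c r - t) / r := (hφ t ht).2 ⟨r, hr, rfl⟩
    _ ≤ (c r - s) / r := by have : 0 < r := hr; gcongr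
    _ = φ s := hrs

lemma IsLeast.slope_le_add_div (hq : IsLeast ((fun r => (c r - t) / r) '' Ioi 0) q) {r : ℝ}
    (hr : 0 < r) (hrs : (c r - s) / r = p) : q ≤ p + (s - t) / r :=
  calc q ≤ (c r - t) / r := hq.2 ⟨r, hr, rfl⟩
    _ = p + (s - t) / r := by rw [← hrs]; ring

lemma IsLeast.slope_pos {m : ℝ} (hcm : ∀ r, m ≤ c r) (hsm : s < m)
    (hp : IsLeast ((fun r => (c r - s) / r) '' Ioi 0) p) : 0 < p := by
  obtain ⟨r, hr, rfl⟩ := hp.1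
  exact div_pos (by linarith [hcm r]) hr

lemma IsLeast.slope_lt_one (hlim : Tendsto (fun r => c r - r) atTop (𝓝 0)) (hs : 0 < s)
    (hp : IsLeast ((fun r => (c r - s) / r) '' Ioi 0) p) : p < 1 := by
  obtain ⟨r, hrs, hr⟩ := ((hlim.eventually_lt_const hs).and (eventually_gt_atTop 0)).exists
  calc p ≤ (c r - s) / r := hp.2 ⟨r, hr, rfl⟩
    _ < 1 := by rw [div_lt_one hr]; linarith

lemma le_div_one_sub_of_slope_eq (hcr : ∀ r, r ≤ c r) (hp : p < 1) {r : ℝ} (hr : 0 < r)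
    (hrs : (c r - s) / r = p) : r ≤ s / (1 - p) := by
  rw [div_eq_iff hr.ne'] at hrs
  rw [le_div_iff₀ (sub_pos.2 hp)]
  linarith [hcr r]

lemma div_le_of_slope_eq {m : ℝ} (hcm : ∀ r, m ≤ c r) (hp : 0 < p) {r : ℝ} (hr : 0 < r)
    (hrs : (c r - s) / r = p) : (m - s) / p ≤ r := by
  rw [div_eq_iff hr.ne'] at hrs
  rw [div_le_iff₀ hp]
  linarith [hcm r]

lemma bddAbove_slope_minimizers (hcr : ∀ r, r ≤ c r)
    (hlim : Tendsto (fun r => c r - r) atTop (𝓝 0)) (hs : 0 < s)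
    (hp : IsLeast ((fun r => (c r - s) / r) '' Ioi 0) p) :
    BddAbove {r | 0 < r ∧ (c r - s) / r = p} :=
  ⟨s / (1 - p), fun _ ⟨hr, hrs⟩ => le_div_one_sub_of_slope_eq hcr (hp.slope_lt_one hlim hs) hr hrs⟩

lemma IsLeast.slope_le_add_div_csSup (hcr : ∀ r, r ≤ c r)
    (hlim : Tendsto (fun r => c r - r) atTop (𝓝 0)) (hs : 0 < s) (hts : t ≤ s)
    (hp : IsLeast ((fun r => (c r - s) / r) '' Ioi 0) p)
    (hq : IsLeast ((fun r => (c r - t) / r) '' Ioi 0) q) :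
    q ≤ p + (s - t) / sSup {r | 0 < r ∧ (c r - s) / r = p} := by
  obtain ⟨r₀, hr₀, hr₀s⟩ := hp.1
  exact le_add_div_csSup ⟨r₀, hr₀, hr₀s⟩ (bddAbove_slope_minimizers hcr hlim hs hp)
    (fun _ hr => hr.1) (sub_nonneg.2 hts) fun _ ⟨hr, hrs⟩ => hq.slope_le_add_div hr hrs

lemma IsLeast.div_le_csSup_slope_minimizers {m : ℝ} (hcr : ∀ r, r ≤ c r) (hcm : ∀ r, m ≤ c r)
    (hlim : Tendsto (fun r => c r - r) atTop (𝓝 0)) (hs : 0 < s) (hsm : s < m)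
    (hp : IsLeast ((fun r => (c r - s) / r) '' Ioi 0) p) :
    (m - s) / p ≤ sSup {r | 0 < r ∧ (c r - s) / r = p} := by
  obtain ⟨r, hr, hrs⟩ := hp.1
  exact (div_le_of_slope_eq hcm (hp.slope_pos hcm hsm) hr hrs).trans
    (le_csSup (bddAbove_slope_minimizers hcr hlim hs hp) ⟨hr, hrs⟩)

end MinimalSlope

lemma lipschitzOnWith_of_antitoneOn_of_le_add_div {f g : ℝ → ℝ} {S : Set ℝ} {ρ : ℝ}
    (hρ : 0 < ρ) (hf : AntitoneOn f S) (hg : ∀ y ∈ S, ρ ≤ g y)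
    (h : ∀ x ∈ S, ∀ y ∈ S, x ≤ y → f x ≤ f y + (y - x) / g y) :
    LipschitzOnWith (Real.toNNReal ρ⁻¹) f S := by
  refine LipschitzOnWith.of_le_add_mul' _ fun x hx y hy => ?_
  have hK : 0 ≤ ρ⁻¹ * dist x y := by positivity
  rcases le_total x y with hxy | hyx
  · calc f x ≤ f y + (y - x) / g y := h x hx y hy hxy
      _ ≤ f y + (y - x) / ρ := by have := sub_nonneg.2 hxy; gcongr; exact hg y hy
      _ = f y + ρ⁻¹ * dist x y := by rw [Real.dist_eq, abs_of_nonpos (by linarith)]; ring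
  · linarith [hf hy hx hyx]

theorem tangent_gradient_lipschitz_general (σ : Measure ℝ) [IsProbabilityMeasure σ]
    (hint : Integrable (fun u : ℝ => u) σ)
    (m : ℝ) (hm : m = ∫ u, u ∂σ)
    (c : ℝ → ℝ) (hc : ∀ r, c r = ((∫ u, |u - r| ∂σ) + r + m) / 2)
    (φ ζ : ℝ → ℝ)
    (hφ : ∀ s ∈ Set.Ioo 0 m,
      IsLeast ((fun r => (c r - s) / r) '' Set.Ioi 0) (φ s))
    (hζ : ∀ s ∈ Set.Ioo 0 m,
      ζ s = sSup {r : ℝ | 0 < r ∧ (c r - s) / r = φ s}) :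
    AntitoneOn φ (Set.Ioo 0 m) ∧
    (∀ s ∈ Set.Ioo 0 m, ∀ δ ∈ Set.Ioo 0 s, φ (s - δ) ≤ φ s + δ / ζ s) ∧
    (∀ a b : ℝ, 0 < a → a ≤ b → b < m →
      ∃ K : NNReal, LipschitzOnWith K φ (Set.Icc a b)) := by
  have hcr (r : ℝ) : r ≤ c r := by
    rw [hc, hm]; exact (le_max_left _ _).trans (max_le_potential hint r)
  have hcm (r : ℝ) : m ≤ c r := by
    rw [hc, hm]; exact (le_max_right _ _).trans (max_le_potential hint r)
  have hlim : Tendsto (fun r => c r - r) atTop (𝓝 0) := by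
    simpa only [hc, hm] using tendsto_potential_sub_atTop hint
  have hanti : AntitoneOn φ (Ioo 0 m) := antitoneOn_of_isLeast_slope hφ
  have hkey : ∀ s ∈ Ioo 0 m, ∀ t ∈ Ioo 0 m, t ≤ s → φ t ≤ φ s + (s - t) / ζ s :=
    fun s hs t ht hts => hζ s hs ▸ (hφ s hs).slope_le_add_div_csSup hcr hlim hs.1 hts (hφ t ht)
  refine ⟨hanti, fun s hs δ hδ => ?_, fun a b ha hab hbm => ?_⟩
  · simpa using
      hkey s hs (s - δ) ⟨by linarith [hδ.2], by linarith [hs.2, hδ.1]⟩ (by linarith [hδ.1])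
  have hIcc : Icc a b ⊆ Ioo 0 m := fun s hs => ⟨ha.trans_le hs.1, hs.2.trans_lt hbm⟩
  have ha' := hIcc (left_mem_Icc.2 hab)
  have hρ : 0 < (m - b) / φ a :=
    div_pos (sub_pos.2 hbm) ((hφ a ha').slope_pos hcm ha'.2)
  have hζ_ge (s : ℝ) (hs : s ∈ Icc a b) : (m - b) / φ a ≤ ζ s := by
    have hs' := hIcc hs
    calc (m - b) / φ a ≤ (m - s) / φ s :=
          div_le_div₀ (sub_pos.2 hs'.2).le (by linarith [hs.2])
            ((hφ s hs').slope_pos hcm hs'.2) (hanti ha' hs' hs.1)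
      _ ≤ ζ s := hζ s hs' ▸ (hφ s hs').div_le_csSup_slope_minimizers hcr hcm hlim hs'.1 hs'.2
  exact ⟨_, lipschitzOnWith_of_antitoneOn_of_le_add_div hρ (hanti.mono hIcc) hζ_ge
    fun x hx y hy => hkey y (hIcc hy) x (hIcc hx)⟩

/-- Lemma 5.4 (regularity part): with `c` the potential function of a probability
measure `σ` on `[0,∞)` with mean `m ∈ (0,∞)`, `φ(s) = min_{r>0} (c(r) − s)/r` and
`ζ(s)` the largest minimizer, the function `φ` is non-increasing on `(0,m)`,
satisfies `φ(s − δ) ≤ φ(s) + δ/ζ(s)` for `0 < δ < s < m`, and is Lipschitz on every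
closed subinterval of `(0,m)`. -/
theorem tangent_gradient_lipschitz (σ : Measure ℝ) [IsProbabilityMeasure σ]
    (hsupp : σ (Set.Iio 0) = 0)
    (hint : Integrable (fun u : ℝ => u) σ)
    (m : ℝ) (hm : m = ∫ u, u ∂σ) (hmpos : 0 < m)
    (c : ℝ → ℝ) (hc : ∀ r, c r = ((∫ u, |u - r| ∂σ) + r + m) / 2)
    (φ ζ : ℝ → ℝ)
    (hφ : ∀ s ∈ Set.Ioo 0 m,
      IsLeast ((fun r => (c r - s) / r) '' Set.Ioi 0) (φ s))
    (hζ : ∀ s ∈ Set.Ioo 0 m,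
      ζ s = sSup {r : ℝ | 0 < r ∧ (c r - s) / r = φ s}) :
    AntitoneOn φ (Set.Ioo 0 m) ∧
    (∀ s ∈ Set.Ioo 0 m, ∀ δ ∈ Set.Ioo 0 s, φ (s - δ) ≤ φ s + δ / ζ s) ∧
    (∀ a b : ℝ, 0 < a → a ≤ b → b < m →
      ∃ K : NNReal, LipschitzOnWith K φ (Set.Icc a b)) :=
  tangent_gradient_lipschitz_general σ hint m hm c hc φ ζ hφ hζ
end

section
/- Let Ψ : [0,∞) → ℝ be convex with non-decreasing right derivative Ψ'₊ bounded above, let Ψ'(+∞) := lim_{x→∞} Ψ'₊(x), and let dΨ'' denote the Lebesgue–Stieltjes measure associated with Ψ'₊. Let Δ : [0,∞) → [0,∞) be non-decreasing and locally absolutely continuous with almost-everywhere derivative Δ'. Then for every l ≥ 0, Ψ'(+∞) − ∫_l^∞ Δ'(m) e^{Δ(m)} (∫_{(m,∞)} e^{−Δ(n)} dΨ''(n)) dm = Ψ'₊(l) + e^{Δ(l)} ∫_{(l,∞)} e^{−Δ(n)} dΨ''(n). -/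
/-!
Put `G x = ∫_{(x,∞)} e^{-Δ} dψ''`. By Tonelli, `∫_l^∞ Δ' e^{Δ} G` equals
`∫_{(l,∞)} e^{-Δ(n)} (∫_l^n Δ' e^{Δ}) dψ''(n)`, and the chain rule for the absolutely continuous
`Δ` (the fundamental theorem of calculus applied to `e^{Δ}`) gives
`∫_l^n Δ' e^{Δ} = e^{Δ(n)} - e^{Δ(l)}`. Hence the left integral is
`ψ''(l,∞) - e^{Δ(l)} G(l) = Ψ'(+∞) - Ψ'₊(l) - e^{Δ(l)} G(l)`.
-/

open MeasureTheory Set Filter Real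
open scoped NNReal ENNReal

namespace AbsolutelyContinuousOnInterval

variable {X Y : Type*} [PseudoMetricSpace X] [PseudoMetricSpace Y] {a b : ℝ} {f : ℝ → X}

theorem congr {g : ℝ → X} (hf : AbsolutelyContinuousOnInterval f a b)
    (hfg : EqOn f g (uIcc a b)) : AbsolutelyContinuousOnInterval g a b := by
  refine Tendsto.congr' (eventually_inf_principal.mpr (Eventually.of_forall fun E hE => ?_)) hf
  exact Finset.sum_congr rfl fun i hi => by rw [hfg (hE.1 i hi).1, hfg (hE.1 i hi).2]

theorem _root_.LipschitzOnWith.comp_absolutelyContinuousOnInterval {g : X → Y} {K : ℝ≥0}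
    {s : Set X} (hg : LipschitzOnWith K g s) (hf : AbsolutelyContinuousOnInterval f a b)
    (hfs : MapsTo f (uIcc a b) s) : AbsolutelyContinuousOnInterval (g ∘ f) a b := by
  have hKf := Tendsto.const_mul (K : ℝ) hf
  rw [mul_zero] at hKf
  refine squeeze_zero' (Eventually.of_forall fun E => Finset.sum_nonneg fun i _ => dist_nonneg)
    (eventually_inf_principal.mpr (Eventually.of_forall fun E hE => ?_)) hKf
  rw [Finset.mul_sum]
  exact Finset.sum_le_sum fun i hi => hg.dist_le_mul _ (hfs (hE.1 i hi).1) _ (hfs (hE.1 i hi).2)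

end AbsolutelyContinuousOnInterval

theorem IntervalIntegrable.absolutelyContinuousOnInterval_of_sub_eq_integral {f f' : ℝ → ℝ}
    {a b : ℝ} (hf' : IntervalIntegrable f' volume a b)
    (hf : ∀ x ∈ uIcc a b, f x - f a = ∫ t in a..x, f' t) :
    AbsolutelyContinuousOnInterval f a b := by
  have hconst : AbsolutelyContinuousOnInterval (fun _ => f a) a b :=
    (LipschitzWith.const (f a)).lipschitzOnWith.absolutelyContinuousOnInterval
  refine (hconst.fun_add (hf'.absolutelyContinuousOnInterval_intervalIntegral left_mem_uIcc)).congr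
    fun x hx => ?_
  simp only [← hf x hx, add_sub_cancel]

theorem AbsolutelyContinuousOnInterval.integral_deriv_comp_mul_deriv {f g : ℝ → ℝ} {a b : ℝ}
    (hf : AbsolutelyContinuousOnInterval f a b) (hg : ContDiff ℝ 1 g) :
    ∫ x in a..b, (deriv g ∘ f) x * deriv f x = (g ∘ f) b - (g ∘ f) a := by
  obtain ⟨C, hC⟩ := hf.exists_bound
  obtain ⟨K, hK⟩ := hg.contDiffOn.exists_lipschitzOnWith one_ne_zero (convex_Icc (-C) C)
    isCompact_Icc
  have hgf : AbsolutelyContinuousOnInterval (g ∘ f) a b :=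
    hK.comp_absolutelyContinuousOnInterval hf fun x hx => abs_le.mp (hC x hx)
  rw [← hgf.integral_deriv_eq_sub]
  refine intervalIntegral.integral_congr_ae ?_
  filter_upwards [hf.ae_differentiableAt] with x hx hxab
  have hgd : Differentiable ℝ g := hg.differentiable one_ne_zero
  exact (((hgd (f x)).hasDerivAt.comp x (hx (uIoc_subset_uIcc hxab)).hasDerivAt).deriv).symm

theorem MonotoneOn.deriv_nonneg_of_mem_nhds {g : ℝ → ℝ} {s : Set ℝ} {x : ℝ}
    (hg : MonotoneOn g s) (hs : s ∈ nhds x) : 0 ≤ deriv g x :=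
  (derivWithin_of_mem_nhds (f := g) hs) ▸ hg.derivWithin_nonneg

theorem lintegral_Ioi_mul_lintegral_Ioi_swap {μ ν : Measure ℝ} [SFinite μ] [SFinite ν]
    {f g : ℝ → ℝ≥0∞} {l : ℝ} (hf : AEMeasurable f (μ.restrict (Ioi l)))
    (hg : AEMeasurable g (ν.restrict (Ioi l))) :
    ∫⁻ x in Ioi l, f x * ∫⁻ n in Ioi x, g n ∂ν ∂μ
      = ∫⁻ n in Ioi l, g n * ∫⁻ x in Ioo l n, f x ∂μ ∂ν := by
  set F : ℝ × ℝ → ℝ≥0∞ := {p | p.1 < p.2}.indicator fun p => f p.1 * g p.2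
  have hF : AEMeasurable F ((μ.restrict (Ioi l)).prod (ν.restrict (Ioi l))) :=
    ((hf.comp_fst (ν := ν.restrict (Ioi l))).mul (hg.comp_snd (μ := μ.restrict (Ioi l)))).indicator
      (measurableSet_lt measurable_fst measurable_snd)
  have hF_Ioi (x n : ℝ) : F (x, n) = (Ioi x).indicator (fun n => f x * g n) n := by
    simp [F, indicator_apply]
  have hF_Iio (x n : ℝ) : F (x, n) = (Iio n).indicator (fun x => f x * g n) x := by
    simp [F, indicator_apply]
  calc ∫⁻ x in Ioi l, f x * ∫⁻ n in Ioi x, g n ∂ν ∂μ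
      = ∫⁻ x in Ioi l, ∫⁻ n in Ioi l, F (x, n) ∂ν ∂μ := by
        refine setLIntegral_congr_fun measurableSet_Ioi fun x hx => ?_
        simp_rw [hF_Ioi, lintegral_indicator measurableSet_Ioi,
          Measure.restrict_restrict measurableSet_Ioi, Ioi_inter_Ioi,
          sup_eq_left.mpr (mem_Ioi.mp hx).le]
        exact (lintegral_const_mul'' _ (hg.mono_measure
          (Measure.restrict_mono (Ioi_subset_Ioi hx.le) le_rfl))).symm
    _ = ∫⁻ n in Ioi l, ∫⁻ x in Ioi l, F (x, n) ∂μ ∂ν := lintegral_lintegral_swap hF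
    _ = ∫⁻ n in Ioi l, g n * ∫⁻ x in Ioo l n, f x ∂μ ∂ν := by
        refine setLIntegral_congr_fun measurableSet_Ioi fun n hn => ?_
        simp_rw [hF_Iio, lintegral_indicator measurableSet_Iio,
          Measure.restrict_restrict measurableSet_Iio, Iio_inter_Ioi]
        rw [lintegral_mul_const'' _ (hf.mono_measure
          (Measure.restrict_mono Ioo_subset_Ioi_self le_rfl)), mul_comm]

theorem lintegral_Ioo_deriv_mul_exp {Δ : ℝ → ℝ} {l n : ℝ} (hln : l ≤ n)
    (hmono : MonotoneOn Δ (Icc l n)) (hAC : AbsolutelyContinuousOnInterval Δ l n) :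
    ∫⁻ x in Ioo l n, ENNReal.ofReal (deriv Δ x * exp (Δ x))
      = ENNReal.ofReal (exp (Δ n) - exp (Δ l)) := by
  have hint : IntegrableOn (fun x => deriv Δ x * exp (Δ x)) (Ioc l n) :=
    (intervalIntegrable_iff_integrableOn_Ioc_of_le hln).mp
      (hAC.intervalIntegrable_deriv.mul_continuousOn
        (continuous_exp.comp_continuousOn hAC.continuousOn))
  have hnonneg : ∀ x ∈ Ioo l n, 0 ≤ deriv Δ x * exp (Δ x) := fun x hx =>
    mul_nonneg (hmono.deriv_nonneg_of_mem_nhds (Icc_mem_nhds hx.1 hx.2)) (exp_pos _).le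
  rw [← ofReal_integral_eq_lintegral_ofReal (hint.mono_set Ioo_subset_Ioc_self)
    (ae_restrict_of_forall_mem measurableSet_Ioo hnonneg), ← integral_Ioc_eq_integral_Ioo,
    ← intervalIntegral.integral_of_le hln]
  congr 1
  simpa [Real.deriv_exp, mul_comm] using hAC.integral_deriv_comp_mul_deriv contDiff_exp

noncomputable def expTail (ν : Measure ℝ) (Δ : ℝ → ℝ) (x : ℝ) : ℝ≥0∞ :=
  ∫⁻ n in Ioi x, ENNReal.ofReal (exp (-Δ n)) ∂ν

/-- Stated as a sum in `ℝ≥0∞`, so that no truncated subtraction is needed. -/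
theorem lintegral_deriv_mul_exp_mul_expTail_add (ν : Measure ℝ) [SFinite ν] {Δ : ℝ → ℝ} {l : ℝ}
    (hmono : MonotoneOn Δ (Ici l)) (hAC : ∀ n, l ≤ n → AbsolutelyContinuousOnInterval Δ l n) :
    (∫⁻ x in Ioi l, ENNReal.ofReal (deriv Δ x * exp (Δ x)) * expTail ν Δ x)
      + ENNReal.ofReal (exp (Δ l)) * expTail ν Δ l = ν (Ioi l) := by
  have hΔ : ∀ μ : Measure ℝ, AEMeasurable Δ (μ.restrict (Ioi l)) := fun μ =>
    aemeasurable_restrict_of_monotoneOn measurableSet_Ioi (hmono.mono Ioi_subset_Ici_self)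
  have hg : AEMeasurable (fun n => ENNReal.ofReal (exp (-Δ n))) (ν.restrict (Ioi l)) :=
    (hΔ ν).neg.exp.ennreal_ofReal
  have hf : AEMeasurable (fun x => ENNReal.ofReal (deriv Δ x * exp (Δ x)))
      (volume.restrict (Ioi l)) :=
    ((measurable_deriv Δ).aemeasurable.mul (hΔ volume).exp).ennreal_ofReal
  unfold expTail
  rw [lintegral_Ioi_mul_lintegral_Ioi_swap hf hg,
    ← lintegral_const_mul' _ _ ENNReal.ofReal_ne_top, ← lintegral_add_right' _ (hg.const_mul _),
    ← setLIntegral_one]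
  refine setLIntegral_congr_fun measurableSet_Ioi fun n hn => ?_
  have hΔln : Δ l ≤ Δ n := hmono self_mem_Ici (mem_Ioi.mp hn).le (mem_Ioi.mp hn).le
  rw [lintegral_Ioo_deriv_mul_exp (mem_Ioi.mp hn).le (hmono.mono Icc_subset_Ici_self)
      (hAC n (mem_Ioi.mp hn).le), ← ENNReal.ofReal_mul (exp_pos _).le,
    ← ENNReal.ofReal_mul (exp_pos _).le,
    ← ENNReal.ofReal_add (mul_nonneg (exp_pos _).le (sub_nonneg.mpr (exp_le_exp.mpr hΔln)))
      (mul_nonneg (exp_pos _).le (exp_pos _).le), ← ENNReal.ofReal_one, exp_neg]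
  congr 1
  field_simp
  ring

theorem stieltjes_exponential_identity_general
    (ψ : StieltjesFunction ℝ)
    (ψinf : ℝ) (hlim : Tendsto (fun x => ψ x) atTop (nhds ψinf))
    (Δ Δ' : ℝ → ℝ)
    (hΔmono : MonotoneOn Δ (Set.Ici 0))
    (hae : ∀ᵐ x : ℝ, x ∈ Set.Ioi (0 : ℝ) → HasDerivAt Δ (Δ' x) x)
    (hΔ'int : ∀ a b : ℝ, 0 ≤ a → a ≤ b → IntervalIntegrable Δ' volume a b)
    (hAC : ∀ a b : ℝ, 0 ≤ a → a ≤ b → Δ b - Δ a = ∫ x in a..b, Δ' x)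
    (l : ℝ) (hl : 0 ≤ l) :
    ψinf - (∫⁻ x in Set.Ioi l, ENNReal.ofReal (Δ' x * Real.exp (Δ x) *
        (∫⁻ n in Set.Ioi x, ENNReal.ofReal (Real.exp (-(Δ n))) ∂ψ.measure).toReal)).toReal
      = ψ l + Real.exp (Δ l) *
        (∫⁻ n in Set.Ioi l, ENNReal.ofReal (Real.exp (-(Δ n))) ∂ψ.measure).toReal := by
  set G := expTail ψ.measure Δ
  have hmono : MonotoneOn Δ (Ici l) := hΔmono.mono (Ici_subset_Ici.mpr hl)
  have hACl (n : ℝ) (hln : l ≤ n) : AbsolutelyContinuousOnInterval Δ l n :=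
    (hΔ'int l n hl hln).absolutelyContinuousOnInterval_of_sub_eq_integral fun x hx =>
      hAC l x hl (uIcc_of_le hln ▸ hx).1
  have hsum := lintegral_deriv_mul_exp_mul_expTail_add ψ.measure hmono hACl
  rw [ψ.measure_Ioi hlim l] at hsum
  obtain ⟨hIfin, hCfin⟩ := ENNReal.add_ne_top.mp (hsum ▸ ENNReal.ofReal_ne_top)
  have hGl : G l ≠ ∞ := fun h =>
    hCfin (ENNReal.mul_eq_top.mpr (Or.inl ⟨(ENNReal.ofReal_pos.mpr (exp_pos _)).ne', h⟩))
  have hI : (∫⁻ x in Ioi l, ENNReal.ofReal (Δ' x * exp (Δ x) * (G x).toReal))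
      = ∫⁻ x in Ioi l, ENNReal.ofReal (deriv Δ x * exp (Δ x)) * G x := by
    refine setLIntegral_congr_fun_ae measurableSet_Ioi ?_
    filter_upwards [hae] with x hx hxl
    have hGx : G x ≠ ∞ := ne_top_of_le_ne_top hGl (lintegral_mono_set (Ioi_subset_Ioi hxl.le))
    rw [← (hx (hl.trans_lt hxl)).deriv, ENNReal.ofReal_mul
      (mul_nonneg (hmono.deriv_nonneg_of_mem_nhds (Ici_mem_nhds hxl)) (exp_pos _).le),
      ENNReal.ofReal_toReal hGx]
  show ψinf - (∫⁻ x in Ioi l, ENNReal.ofReal (Δ' x * exp (Δ x) * (G x).toReal)).toReal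
    = ψ l + exp (Δ l) * (G l).toReal
  have hreal := congrArg ENNReal.toReal hsum
  rw [← hI] at hreal hIfin
  rw [ENNReal.toReal_add hIfin hCfin, ENNReal.toReal_mul, ENNReal.toReal_ofReal (exp_pos _).le,
    ENNReal.toReal_ofReal (sub_nonneg.mpr (ψ.mono.ge_of_tendsto hlim l))] at hreal
  linarith

/-- The computation in the proof of the optimality theorem (Section 5.2): for a
convex `Ψ` on `[0,∞)` whose right derivative `ψ = Ψ'₊` (a Stieltjes function, with
associated Lebesgue–Stieltjes measure `ψ.measure = dΨ''`) is bounded above with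
limit `ψinf = Ψ'(+∞)` at infinity, and for a non-decreasing, non-negative, locally
absolutely continuous `Δ` with a.e. derivative `Δ'`, one has for every `l ≥ 0`:
`Ψ'(+∞) − ∫_l^∞ Δ'(m) e^{Δ(m)} (∫_{(m,∞)} e^{−Δ(n)} dΨ''(n)) dm
  = Ψ'₊(l) + e^{Δ(l)} ∫_{(l,∞)} e^{−Δ(n)} dΨ''(n)`. -/
theorem stieltjes_exponential_identity
    (Ψ : ℝ → ℝ) (ψ : StieltjesFunction ℝ)
    (hconv : ConvexOn ℝ (Set.Ici 0) Ψ)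
    (hderiv : ∀ x ∈ Set.Ici (0 : ℝ), HasDerivWithinAt Ψ (ψ x) (Set.Ici x) x)
    (B : ℝ) (hbdd : ∀ x, ψ x ≤ B)
    (ψinf : ℝ) (hlim : Tendsto (fun x => ψ x) atTop (nhds ψinf))
    (Δ Δ' : ℝ → ℝ)
    (hΔmono : MonotoneOn Δ (Set.Ici 0))
    (hΔnonneg : ∀ x ∈ Set.Ici (0 : ℝ), 0 ≤ Δ x)
    (hae : ∀ᵐ x : ℝ, x ∈ Set.Ioi (0 : ℝ) → HasDerivAt Δ (Δ' x) x)
    (hΔ'int : ∀ a b : ℝ, 0 ≤ a → a ≤ b → IntervalIntegrable Δ' volume a b)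
    (hAC : ∀ a b : ℝ, 0 ≤ a → a ≤ b → Δ b - Δ a = ∫ x in a..b, Δ' x)
    (l : ℝ) (hl : 0 ≤ l) :
    ψinf - (∫⁻ x in Set.Ioi l, ENNReal.ofReal (Δ' x * Real.exp (Δ x) *
        (∫⁻ n in Set.Ioi x, ENNReal.ofReal (Real.exp (-(Δ n))) ∂ψ.measure).toReal)).toReal
      = ψ l + Real.exp (Δ l) *
        (∫⁻ n in Set.Ioi l, ENNReal.ofReal (Real.exp (-(Δ n))) ∂ψ.measure).toReal :=
  stieltjes_exponential_identity_general ψ ψinf hlim Δ Δ' hΔmono hae hΔ'int hAC l hl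
end

section
/- Let ε ∈ (0,1), let S be a measurable space, and let κ and μ̃₁ be probability measures on S with μ̃₁ absolutely continuous with respect to κ. Let K > 8/ε be such that κ(A) < 1/K implies μ̃₁(A) < ε/8 for every measurable A ⊂ S, and set δ := ε/(4K). Let C ∈ [0, 1−ε], and for each γ ∈ S let W_γ : [1,∞) → [0,∞) be a concave function with W_γ(1) = C and W_γ(x) ≤ √x for all x ≥ 1, such that γ ↦ W_γ(x) is measurable for each x, γ ↦ ∂₊W_γ(1) (the right derivative at 1) is measurable, and ∫_S ∂₊W_γ(1) dκ(γ) ≤ C/2. Let (ν_γ)_{γ∈S} be a measurable family of probability measures on [1,∞) with ∫_S ν_γ([1, 1+δ]) dμ̃₁(γ) > 1 − ε/4. Then ∫_S ∫_{[1,∞)} (W_γ(x)/√x) dν_γ(x) dμ̃₁(γ) < C + ε. -/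
/-!
Concavity puts each `W γ` below its tangent line at `1`, and `W γ ≥ 0` forces the slope
`D γ` to be nonnegative; hence `W γ x / √x ≤ C + δ D γ` on `[1, 1 + δ]`, while
`W γ x / √x ≤ 1` everywhere. Markov's inequality gives `κ {D ≥ K} ≤ C / (2K) < 1 / K`, so
`μ̃₁ {D ≥ K} < ε / 8`, and off that set `δ D γ ≤ ε / 4`. Integrating, the double integral is
at most
`C + ε / 4 + ε / 8 + 1 - ∫ ν_γ [1, 1 + δ] dμ̃₁(γ) < C + 5ε / 8`.
-/

open MeasureTheory Set ProbabilityTheory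

namespace ConcaveOn

variable {S : Set ℝ} {f : ℝ → ℝ} {a x f' : ℝ}

theorem le_add_mul_sub_of_hasDerivWithinAt (hf : ConcaveOn ℝ S f) (ha : a ∈ S) (hx : x ∈ S)
    (hax : a ≤ x) (hf' : HasDerivWithinAt f f' S a) : f x ≤ f a + f' * (x - a) := by
  rcases hax.eq_or_lt with rfl | hax
  · simp
  have hslope := hf.slope_le_of_hasDerivWithinAt ha hx hax hf'
  rw [slope_def_field, div_le_iff₀ (sub_pos.2 hax)] at hslope
  linarith

/-- Otherwise the tangent line at `a`, which lies above `f`, would become negative. -/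
theorem nonneg_of_hasDerivWithinAt_Ici (hf : ConcaveOn ℝ (Ici a) f)
    (hf_nonneg : ∀ x ∈ Ici a, 0 ≤ f x) (hf' : HasDerivWithinAt f f' (Ici a) a) : 0 ≤ f' := by
  by_contra! hneg
  have hfa := hf_nonneg a self_mem_Ici
  set x := a + (f a + 1) / -f'
  have hax : a ≤ x := le_add_of_nonneg_right (div_nonneg (by linarith) (by linarith))
  have htangent := hf.le_add_mul_sub_of_hasDerivWithinAt self_mem_Ici hax hax hf'
  have : f' * (x - a) = -(f a + 1) := by
    simp only [x, add_sub_cancel_left]; field_simp [hneg.ne]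
  linarith [hf_nonneg x hax]

end ConcaveOn

theorem integral_le_add_one_sub_measureReal {α : Type*} [MeasurableSpace α] {ν : Measure α}
    [IsProbabilityMeasure ν] {s : Set α} (hs : MeasurableSet s) {h : α → ℝ} {c : ℝ}
    (hc : 0 ≤ c) (h_le_one : ∀ᵐ x ∂ν, h x ≤ 1) (h_le : ∀ᵐ x ∂ν, x ∈ s → h x ≤ c) :
    ∫ x, h x ∂ν ≤ c + 1 - ν.real s := by
  have hs_le_one : ν.real s ≤ 1 := measureReal_le_one
  by_cases hint : Integrable h ν
  swap
  · rw [integral_undef hint]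
    linarith
  have hbound : Integrable (fun x => s.indicator (fun _ => c - 1) x + 1) ν :=
    ((integrable_const _).indicator hs).add (integrable_const _)
  calc ∫ x, h x ∂ν ≤ ∫ x, (s.indicator (fun _ => c - 1) x + 1) ∂ν := by
        refine integral_mono_ae hint hbound ?_
        filter_upwards [h_le_one, h_le] with x h1 hxc
        by_cases hx : x ∈ s
        · simp [hx, hxc hx]
        · simp [hx, h1]
    _ = (c - 1) * ν.real s + 1 := by
        rw [integral_add ((integrable_const _).indicator hs) (integrable_const _),
          integral_indicator_const _ hs, integral_const, probReal_univ, smul_eq_mul,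
          smul_eq_mul, one_mul, mul_comm]
    _ ≤ c + 1 - ν.real s := by nlinarith [measureReal_nonneg (μ := ν) (s := s)]

theorem integral_div_sqrt_le_of_concaveOn {w : ℝ → ℝ} {d δ : ℝ} {ν : Measure ℝ}
    [IsProbabilityMeasure ν] (hν : ν (Iio 1) = 0) (hw : ConcaveOn ℝ (Ici 1) w)
    (hw_nonneg : ∀ x ∈ Ici (1 : ℝ), 0 ≤ w x) (hw_sqrt : ∀ x ∈ Ici (1 : ℝ), w x ≤ √x)
    (hd : HasDerivWithinAt w d (Ici 1) 1) (hδ : 0 ≤ δ) :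
    ∫ x, w x / √x ∂ν ≤ min (w 1 + d * δ) 1 + 1 - ν.real (Icc 1 (1 + δ)) := by
  have hd_nonneg : 0 ≤ d := hw.nonneg_of_hasDerivWithinAt_Ici hw_nonneg hd
  have hsupp : ∀ᵐ x ∂ν, 1 ≤ x := by
    simpa using measure_eq_zero_iff_ae_notMem.1 hν
  refine integral_le_add_one_sub_measureReal measurableSet_Icc
    (le_min (add_nonneg (hw_nonneg 1 self_mem_Ici) (mul_nonneg hd_nonneg hδ)) zero_le_one) ?_
    (ae_of_all _ fun x hx => ?_)
  · filter_upwards [hsupp] with x hx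
      using div_le_one_of_le₀ (hw_sqrt x hx) (Real.sqrt_nonneg x)
  refine le_min ?_ (div_le_one_of_le₀ (hw_sqrt x hx.1) (Real.sqrt_nonneg x))
  calc w x / √x ≤ w x := div_le_self (hw_nonneg x hx.1) (Real.one_le_sqrt.2 hx.1)
    _ ≤ w 1 + d * (x - 1) := hw.le_add_mul_sub_of_hasDerivWithinAt self_mem_Ici hx.1 hx.1 hd
    _ ≤ w 1 + d * δ := by gcongr; linarith [hx.2]

theorem integral_le_add_measureReal_add_one_sub_integral {α : Type*} [MeasurableSpace α]
    {μ : Measure α} [IsProbabilityMeasure μ] {g f : α → ℝ} {A : Set α} (hA : MeasurableSet A)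
    {b : ℝ} (hb : 0 ≤ b) (hf : Integrable f μ) (hf_le_one : ∀ a, f a ≤ 1)
    (hg : ∀ a, g a ≤ b + A.indicator 1 a + 1 - f a) :
    ∫ a, g a ∂μ ≤ b + μ.real A + 1 - ∫ a, f a ∂μ := by
  have hA_int : Integrable (A.indicator (1 : α → ℝ)) μ := (integrable_const 1).indicator hA
  have hbA : Integrable (fun a => b + A.indicator 1 a) μ := (integrable_const b).add hA_int
  have hbA1 : Integrable (fun a => b + A.indicator 1 a + 1) μ := hbA.add (integrable_const 1)
  by_cases hg_int : Integrable g μ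
  · calc ∫ a, g a ∂μ ≤ ∫ a, (b + A.indicator 1 a + 1 - f a) ∂μ :=
          integral_mono hg_int (hbA1.sub hf) hg
      _ = b + μ.real A + 1 - ∫ a, f a ∂μ := by
          rw [integral_sub hbA1 hf, integral_add hbA (integrable_const 1),
            integral_add (integrable_const b) hA_int, integral_indicator_one hA]
          simp
  · have hf_mean : ∫ a, f a ∂μ ≤ 1 := by
      simpa using integral_mono hf (integrable_const 1) hf_le_one
    rw [integral_undef hg_int]
    linarith [measureReal_nonneg (μ := μ) (s := A)]

theorem excessive_integral_estimate_general {S : Type*} [MeasurableSpace S]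
    (ε : ℝ) (hε : ε ∈ Set.Ioo (0 : ℝ) 1)
    (κ μ₁ : Measure S) [IsProbabilityMeasure κ] [IsProbabilityMeasure μ₁]
    (K : ℝ) (hK : 8 / ε < K)
    (hKprop : ∀ A : Set S, MeasurableSet A →
      (κ A).toReal < 1 / K → (μ₁ A).toReal < ε / 8)
    (δ : ℝ) (hδ : δ = ε / (4 * K))
    (C : ℝ) (hC0 : 0 ≤ C) (hC1 : C ≤ 1 - ε)
    (W : S → ℝ → ℝ)
    (hWconc : ∀ γ, ConcaveOn ℝ (Set.Ici 1) (W γ))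
    (hW1 : ∀ γ, W γ 1 = C)
    (hWnonneg : ∀ γ, ∀ x ∈ Set.Ici (1 : ℝ), 0 ≤ W γ x)
    (hWsqrt : ∀ γ, ∀ x ∈ Set.Ici (1 : ℝ), W γ x ≤ Real.sqrt x)
    (D : S → ℝ)
    (hD : ∀ γ, HasDerivWithinAt (W γ) (D γ) (Set.Ici 1) 1)
    (hDmeas : Measurable D) (hDint : Integrable D κ)
    (hDbound : ∫ γ, D γ ∂κ ≤ C / 2)
    (ν : Kernel S ℝ) [IsMarkovKernel ν]
    (hνsupp : ∀ γ, ν γ (Set.Iio 1) = 0)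
    (hconc : 1 - ε / 4 < ∫ γ, (ν γ (Set.Icc 1 (1 + δ))).toReal ∂μ₁) :
    ∫ γ, (∫ x, W γ x / Real.sqrt x ∂(ν γ)) ∂μ₁ < C + ε := by
  have hε0 : 0 < ε := hε.1
  have hK0 : 0 < K := (by positivity : 0 < 8 / ε).trans hK
  have hδ0 : 0 ≤ δ := by rw [hδ]; positivity
  have hδK : K * δ = ε / 4 := by rw [hδ]; field_simp
  have hD0 γ : 0 ≤ D γ := (hWconc γ).nonneg_of_hasDerivWithinAt_Ici (hWnonneg γ) (hD γ)
  set A := {γ | K ≤ D γ}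
  have hA : MeasurableSet A := measurableSet_le measurable_const hDmeas
  have hμA : μ₁.real A < ε / 8 := hKprop A hA <| by
    have hmarkov : K * κ.real A ≤ ∫ γ, D γ ∂κ :=
      mul_meas_ge_le_integral_of_nonneg (ae_of_all κ hD0) hDint K
    rw [← measureReal_def, lt_div_iff₀ hK0, mul_comm]
    linarith
  have hinner γ : ∫ x, W γ x / √x ∂ν γ ≤
      C + ε / 4 + A.indicator 1 γ + 1 - (ν γ).real (Icc 1 (1 + δ)) := by
    have h := integral_div_sqrt_le_of_concaveOn (hνsupp γ) (hWconc γ) (hWnonneg γ) (hWsqrt γ)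
      (hD γ) hδ0
    by_cases hγ : γ ∈ A
    · simp only [indicator_of_mem hγ, Pi.one_apply] at h ⊢
      linarith [min_le_right (W γ 1 + D γ * δ) 1]
    · have : D γ * δ ≤ K * δ := by gcongr; exact le_of_not_ge hγ
      simp only [indicator_of_notMem hγ, hW1] at h ⊢
      linarith [min_le_left (C + D γ * δ) 1]
  have hf_int : Integrable (fun γ => (ν γ).real (Icc 1 (1 + δ))) μ₁ := .of_mem_Icc 0 1
    (ν.measurable_coe measurableSet_Icc).ennreal_toReal.aemeasurable
    (ae_of_all _ fun γ => ⟨measureReal_nonneg, measureReal_le_one⟩)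
  have hbound := integral_le_add_measureReal_add_one_sub_integral hA (by positivity) hf_int
    (fun γ => measureReal_le_one) hinner
  simp only [measureReal_def] at hbound hμA
  linarith

/-- The analytic core of Theorem 3.2: the key estimate showing
`⟨μ − δ₀, g⟩ < ε` for bounded `α`-excessive `g` with `g(𝟎) = C ≤ 1 − ε`.
Here `κ, μ̃₁` are probability measures on a measurable space `S` with `μ̃₁ ≪ κ`,
`K > 8/ε` is such that `κ(A) < 1/K` forces `μ̃₁(A) < ε/8`, `δ = ε/(4K)`,
`W γ` are concave functions on `[1,∞)` with `W γ 1 = C`, `0 ≤ W γ ≤ √·`,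
right derivative `D γ` at `1`, `∫ D dκ ≤ C/2`, and `(ν γ)` is a measurable family
of probability measures on `[1,∞)` with `∫ νγ([1,1+δ]) dμ̃₁ > 1 − ε/4`.
Then `∫∫ W γ x / √x dνγ(x) dμ̃₁(γ) < C + ε`. -/
theorem excessive_integral_estimate {S : Type*} [MeasurableSpace S]
    (ε : ℝ) (hε : ε ∈ Set.Ioo (0 : ℝ) 1)
    (κ μ₁ : Measure S) [IsProbabilityMeasure κ] [IsProbabilityMeasure μ₁]
    (habs : μ₁ ≪ κ)
    (K : ℝ) (hK : 8 / ε < K)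
    (hKprop : ∀ A : Set S, MeasurableSet A →
      (κ A).toReal < 1 / K → (μ₁ A).toReal < ε / 8)
    (δ : ℝ) (hδ : δ = ε / (4 * K))
    (C : ℝ) (hC0 : 0 ≤ C) (hC1 : C ≤ 1 - ε)
    (W : S → ℝ → ℝ)
    (hWconc : ∀ γ, ConcaveOn ℝ (Set.Ici 1) (W γ))
    (hW1 : ∀ γ, W γ 1 = C)
    (hWnonneg : ∀ γ, ∀ x ∈ Set.Ici (1 : ℝ), 0 ≤ W γ x)
    (hWsqrt : ∀ γ, ∀ x ∈ Set.Ici (1 : ℝ), W γ x ≤ Real.sqrt x)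
    (hWmeas : ∀ x : ℝ, Measurable fun γ => W γ x)
    (D : S → ℝ)
    (hD : ∀ γ, HasDerivWithinAt (W γ) (D γ) (Set.Ici 1) 1)
    (hDmeas : Measurable D) (hDint : Integrable D κ)
    (hDbound : ∫ γ, D γ ∂κ ≤ C / 2)
    (ν : Kernel S ℝ) [IsMarkovKernel ν]
    (hνsupp : ∀ γ, ν γ (Set.Iio 1) = 0)
    (hconc : 1 - ε / 4 < ∫ γ, (ν γ (Set.Icc 1 (1 + δ))).toReal ∂μ₁) :
    ∫ γ, (∫ x, W γ x / Real.sqrt x ∂(ν γ)) ∂μ₁ < C + ε :=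
  excessive_integral_estimate_general ε hε κ μ₁ K hK hKprop δ hδ C hC0 hC1 W hWconc hW1 hWnonneg
    hWsqrt D hD hDmeas hDint hDbound ν hνsupp hconc
end
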